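/- arXiv:math/9605235 — 6 statements merged into one kernel-verified Lean document; each statement's English description precedes it below -/
import Mathlib

section
/- Let δ be an ordinal and suppose for ℓ = 0,1,2,3 that ⟨B^ℓ_i : i ≤ δ⟩ are increasing continuous chains of Boolean algebras with B^ℓ_0 trivial (two-element), satisfying: (b) B^2_i ⊆ B^3_i and B^0_i ⊆ B^1_i for all i ≤ δ; (c) B^1_{i+1} is a complete Boolean algebra for every i < δ; (d) ⟨h_i : i ≤ δ⟩ is an increasing sequence where h_i is a homomorphism from B^2_i into B^0_i; (e) for every i < δ, if x ∈ B^2_{i+1}, y ∈ B^3_i and x ∧ y = 0 in B^3_{i+1}, then there is z ∈ B^2_i with z ∧ y = 0 in B^3_i and x ≤ z in B^2_{i+1}. Then there is a homomorphism h from B^3_δ into B^1_δ extending h_δ. -/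
universe u

/-- A subset of a Boolean algebra closed under the Boolean operations. -/
def IsSubalgebraSet {α : Type u} [BooleanAlgebra α] (S : Set α) : Prop :=
  ⊥ ∈ S ∧ ⊤ ∈ S ∧ (∀ a ∈ S, aᶜ ∈ S) ∧ (∀ a ∈ S, ∀ b ∈ S, a ⊔ b ∈ S) ∧
    ∀ a ∈ S, ∀ b ∈ S, a ⊓ b ∈ S

/-- `f` is a Boolean homomorphism on the subalgebra `S`. -/
def IsHomOn {α : Type u} {β : Type u} [BooleanAlgebra α] [BooleanAlgebra β]
    (S : Set α) (f : α → β) : Prop :=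
  f ⊥ = ⊥ ∧ f ⊤ = ⊤ ∧ (∀ a ∈ S, f aᶜ = (f a)ᶜ) ∧
    (∀ a ∈ S, ∀ b ∈ S, f (a ⊔ b) = f a ⊔ f b) ∧
    ∀ a ∈ S, ∀ b ∈ S, f (a ⊓ b) = f a ⊓ f b

section BooleanLemmas

variable {Z : Type u} [BooleanAlgebra Z]

theorem bm_le_compl {x y : Z} : x ⊓ y = ⊥ ↔ x ≤ yᶜ := by
  rw [← disjoint_iff, le_compl_iff_disjoint_right]

theorem bm_le_of_inf_compl {x y : Z} (h : x ⊓ yᶜ = ⊥) : x ≤ y := by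
  have := bm_le_compl.1 h; rwa [compl_compl] at this

theorem bm_inf_compl_of_le {x y : Z} (h : x ≤ y) : x ⊓ yᶜ = ⊥ :=
  disjoint_iff.1 (disjoint_compl_right.mono_left h)

theorem bm_inf_t (a b t : Z) : ((a ⊓ t) ⊔ (b ⊓ tᶜ)) ⊓ t = a ⊓ t := by
  rw [inf_sup_right]
  have h1 : b ⊓ tᶜ ⊓ t = ⊥ := by rw [inf_assoc]; simp
  have h2 : a ⊓ t ⊓ t = a ⊓ t := by rw [inf_assoc, inf_idem]
  rw [h1, h2, sup_bot_eq]

theorem bm_inf_tc (a b t : Z) : ((a ⊓ t) ⊔ (b ⊓ tᶜ)) ⊓ tᶜ = b ⊓ tᶜ := by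
  have := bm_inf_t b a tᶜ
  rwa [compl_compl, sup_comm] at this

theorem bm_compl (a b t : Z) : ((a ⊓ t) ⊔ (b ⊓ tᶜ))ᶜ = (aᶜ ⊓ t) ⊔ (bᶜ ⊓ tᶜ) := by
  apply compl_unique
  · rw [inf_sup_left, inf_sup_right, inf_sup_right]
    have e1 : a ⊓ t ⊓ (aᶜ ⊓ t) = ⊥ := by rw [inf_inf_inf_comm]; simp
    have e2 : a ⊓ t ⊓ (bᶜ ⊓ tᶜ) = ⊥ := by rw [inf_inf_inf_comm]; simp
    have e3 : b ⊓ tᶜ ⊓ (aᶜ ⊓ t) = ⊥ := by rw [inf_inf_inf_comm]; simp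
    have e4 : b ⊓ tᶜ ⊓ (bᶜ ⊓ tᶜ) = ⊥ := by rw [inf_inf_inf_comm]; simp
    rw [e1, e2, e3, e4]; simp
  · rw [sup_sup_sup_comm, ← inf_sup_right, ← inf_sup_right]; simp

theorem bm_sup (a b a' b' t : Z) :
    ((a ⊓ t) ⊔ (b ⊓ tᶜ)) ⊔ ((a' ⊓ t) ⊔ (b' ⊓ tᶜ)) = ((a ⊔ a') ⊓ t) ⊔ ((b ⊔ b') ⊓ tᶜ) := by
  rw [sup_sup_sup_comm, ← inf_sup_right, ← inf_sup_right]

theorem bm_inf (a b a' b' t : Z) :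
    ((a ⊓ t) ⊔ (b ⊓ tᶜ)) ⊓ ((a' ⊓ t) ⊔ (b' ⊓ tᶜ)) = ((a ⊓ a') ⊓ t) ⊔ ((b ⊓ b') ⊓ tᶜ) := by
  rw [inf_sup_left, inf_sup_right, inf_sup_right]
  have e2 : a ⊓ t ⊓ (b' ⊓ tᶜ) = ⊥ := by rw [inf_inf_inf_comm]; simp
  have e3 : b ⊓ tᶜ ⊓ (a' ⊓ t) = ⊥ := by rw [inf_inf_inf_comm]; simp
  have e1 : a ⊓ t ⊓ (a' ⊓ t) = a ⊓ a' ⊓ t := by rw [inf_inf_inf_comm, inf_idem]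
  have e4 : b ⊓ tᶜ ⊓ (b' ⊓ tᶜ) = b ⊓ b' ⊓ tᶜ := by rw [inf_inf_inf_comm, inf_idem]
  rw [e1, e2, e3, e4, sup_bot_eq, bot_sup_eq]

theorem bm_self (x t : Z) : x = (x ⊓ t) ⊔ (x ⊓ tᶜ) := by rw [← inf_sup_left]; simp

end BooleanLemmas

section Aux

variable {X Y : Type u} [BooleanAlgebra X] [BooleanAlgebra Y]

/-- Domain of a relation. -/
def Gdom (G : Set (X × Y)) : Set X := {x | ∃ y, (x, y) ∈ G}

/-- Graph of a partial Boolean homomorphism with values in `C`. -/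
def HomGraph (C : Set Y) (G : Set (X × Y)) : Prop :=
  (∀ p ∈ G, p.2 ∈ C) ∧ (∀ x y y', (x, y) ∈ G → (x, y') ∈ G → y = y') ∧
  ((⊥, ⊥) : X × Y) ∈ G ∧ ((⊤, ⊤) : X × Y) ∈ G ∧
  (∀ x y, (x, y) ∈ G → (xᶜ, yᶜ) ∈ G) ∧
  (∀ x y x' y', (x, y) ∈ G → (x', y') ∈ G → (x ⊔ x', y ⊔ y') ∈ G) ∧
  (∀ x y x' y', (x, y) ∈ G → (x', y') ∈ G → (x ⊓ x', y ⊓ y') ∈ G)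

theorem HomGraph.mono {C C' : Set Y} {G : Set (X × Y)} (hG : HomGraph C G) (hCC : C ⊆ C') :
    HomGraph C' G :=
  ⟨fun p hp => hCC (hG.1 p hp), hG.2⟩

theorem HomGraph.disj {C : Set Y} {G : Set (X × Y)} (hG : HomGraph C G)
    {x y x' y'} (hxy : (x, y) ∈ G) (hxy' : (x', y') ∈ G) (hd : x ⊓ x' = ⊥) :
    y ⊓ y' = ⊥ := by
  have h1 := hG.2.2.2.2.2.2 x y x' y' hxy hxy'
  rw [hd] at h1
  exact hG.2.1 ⊥ _ _ h1 hG.2.2.1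

theorem HomGraph.le {C : Set Y} {G : Set (X × Y)} (hG : HomGraph C G)
    {x y x' y'} (hxy : (x, y) ∈ G) (hxy' : (x', y') ∈ G) (hd : x ≤ x') : y ≤ y' := by
  have h1 := hG.2.2.2.2.2.2 x y x' y' hxy hxy'
  rw [inf_eq_left.2 hd] at h1
  exact inf_eq_left.1 (hG.2.1 x _ _ h1 hxy)

/-- One-point extension of a homomorphism graph. -/
theorem extend_one {C : Set Y} {G : Set (X × Y)} (hC : IsSubalgebraSet C)
    (hG : HomGraph C G) (t : X) (v : Y) (hv : v ∈ C)
    (star1 : ∀ x y, (x, y) ∈ G → x ⊓ t = ⊥ → y ⊓ v = ⊥)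
    (star2 : ∀ x y, (x, y) ∈ G → x ≤ t → y ≤ v) :
    ∃ G', G ⊆ G' ∧ HomGraph C G' ∧ (t, v) ∈ G' ∧
      ∀ p ∈ G', ∃ a u b w, (a, u) ∈ G ∧ (b, w) ∈ G ∧
        p = ((a ⊓ t) ⊔ (b ⊓ tᶜ), (u ⊓ v) ⊔ (w ⊓ vᶜ)) := by
  obtain ⟨hran, hfun, hbot, htop, hcompl, hsup, hinf⟩ := hG
  refine ⟨{p | ∃ a u b w, (a, u) ∈ G ∧ (b, w) ∈ G ∧
      p = ((a ⊓ t) ⊔ (b ⊓ tᶜ), (u ⊓ v) ⊔ (w ⊓ vᶜ))}, ?_, ?_, ?_, ?_⟩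
  · -- G ⊆ G'
    rintro ⟨x, y⟩ hxy
    exact ⟨x, y, x, y, hxy, hxy, by rw [← bm_self, ← bm_self]⟩
  · -- HomGraph
    have half1 : ∀ a u a' u', (a, u) ∈ G → (a', u') ∈ G → a ⊓ t ≤ a' → u ⊓ v ≤ u' := by
      intro a u a' u' ha ha' hle
      have hc : (a ⊓ a'ᶜ, u ⊓ u'ᶜ) ∈ G := hinf _ _ _ _ ha (hcompl _ _ ha')
      have hct : (a ⊓ a'ᶜ) ⊓ t = ⊥ := by
        rw [inf_right_comm]; exact bm_inf_compl_of_le hle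
      have hst := star1 _ _ hc hct
      have h2 : (u ⊓ v) ⊓ u'ᶜ = ⊥ := by rw [inf_right_comm]; exact hst
      exact bm_le_of_inf_compl h2
    have half2 : ∀ b w b' w', (b, w) ∈ G → (b', w') ∈ G → b ⊓ tᶜ ≤ b' → w ⊓ vᶜ ≤ w' := by
      intro b w b' w' hb hb' hle
      have hc : (b ⊓ b'ᶜ, w ⊓ w'ᶜ) ∈ G := hinf _ _ _ _ hb (hcompl _ _ hb')
      have hct : (b ⊓ b'ᶜ) ⊓ tᶜ = ⊥ := by
        rw [inf_right_comm]; exact bm_inf_compl_of_le hle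
      have hst : w ⊓ w'ᶜ ≤ v := star2 _ _ hc (bm_le_of_inf_compl hct)
      have h2 : (w ⊓ vᶜ) ⊓ w'ᶜ = ⊥ := by rw [inf_right_comm]; exact bm_inf_compl_of_le hst
      exact bm_le_of_inf_compl h2
    have hfun' : ∀ x y y', (x, y) ∈ {p : X × Y | ∃ a u b w, (a, u) ∈ G ∧ (b, w) ∈ G ∧
        p = ((a ⊓ t) ⊔ (b ⊓ tᶜ), (u ⊓ v) ⊔ (w ⊓ vᶜ))} →
        (x, y') ∈ {p : X × Y | ∃ a u b w, (a, u) ∈ G ∧ (b, w) ∈ G ∧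
        p = ((a ⊓ t) ⊔ (b ⊓ tᶜ), (u ⊓ v) ⊔ (w ⊓ vᶜ))} → y = y' := by
      rintro x y y' ⟨a, u, b, w, ha, hb, hp⟩ ⟨a', u', b', w', ha', hb', hq⟩
      obtain ⟨hp1, hp2⟩ := Prod.mk.injEq .. ▸ hp
      obtain ⟨hq1, hq2⟩ := Prod.mk.injEq .. ▸ hq
      have hx : (a ⊓ t) ⊔ (b ⊓ tᶜ) = (a' ⊓ t) ⊔ (b' ⊓ tᶜ) := by rw [← hp1, ← hq1]
      have hat : a ⊓ t = a' ⊓ t := by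
        have := congrArg (· ⊓ t) hx; simpa [bm_inf_t] using this
      have hbt : b ⊓ tᶜ = b' ⊓ tᶜ := by
        have := congrArg (· ⊓ tᶜ) hx; simpa [bm_inf_tc] using this
      have h1 : u ⊓ v = u' ⊓ v := by
        refine le_antisymm (le_inf (half1 _ _ _ _ ha ha' ?_) inf_le_right)
          (le_inf (half1 _ _ _ _ ha' ha ?_) inf_le_right)
        · rw [hat]; exact inf_le_left
        · rw [← hat]; exact inf_le_left
      have h2 : w ⊓ vᶜ = w' ⊓ vᶜ := by
        refine le_antisymm (le_inf (half2 _ _ _ _ hb hb' ?_) inf_le_right)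
          (le_inf (half2 _ _ _ _ hb' hb ?_) inf_le_right)
        · rw [hbt]; exact inf_le_left
        · rw [← hbt]; exact inf_le_left
      rw [hp2, hq2, h1, h2]
    refine ⟨?_, hfun', ?_, ?_, ?_, ?_, ?_⟩
    · rintro p ⟨a, u, b, w, ha, hb, hp⟩
      have hu : u ∈ C := hran (a, u) ha
      have hw : w ∈ C := hran (b, w) hb
      rw [hp]
      exact hC.2.2.2.1 _ (hC.2.2.2.2 u hu v hv) _ (hC.2.2.2.2 w hw vᶜ (hC.2.2.1 v hv))
    · exact ⟨⊥, ⊥, ⊥, ⊥, hbot, hbot, by simp⟩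
    · exact ⟨⊤, ⊤, ⊤, ⊤, htop, htop, by simp⟩
    · rintro x y ⟨a, u, b, w, ha, hb, hp⟩
      refine ⟨aᶜ, uᶜ, bᶜ, wᶜ, hcompl _ _ ha, hcompl _ _ hb, ?_⟩
      obtain ⟨hp1, hp2⟩ := Prod.mk.injEq .. ▸ hp
      rw [Prod.mk.injEq, hp1, hp2, bm_compl, bm_compl]
      exact ⟨rfl, rfl⟩
    · rintro x y x' y' ⟨a, u, b, w, ha, hb, hp⟩ ⟨a', u', b', w', ha', hb', hq⟩
      refine ⟨a ⊔ a', u ⊔ u', b ⊔ b', w ⊔ w', hsup _ _ _ _ ha ha', hsup _ _ _ _ hb hb', ?_⟩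
      obtain ⟨hp1, hp2⟩ := Prod.mk.injEq .. ▸ hp
      obtain ⟨hq1, hq2⟩ := Prod.mk.injEq .. ▸ hq
      rw [Prod.mk.injEq, hp1, hp2, hq1, hq2, bm_sup, bm_sup]
      exact ⟨rfl, rfl⟩
    · rintro x y x' y' ⟨a, u, b, w, ha, hb, hp⟩ ⟨a', u', b', w', ha', hb', hq⟩
      refine ⟨a ⊓ a', u ⊓ u', b ⊓ b', w ⊓ w', hinf _ _ _ _ ha ha', hinf _ _ _ _ hb hb', ?_⟩
      obtain ⟨hp1, hp2⟩ := Prod.mk.injEq .. ▸ hp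
      obtain ⟨hq1, hq2⟩ := Prod.mk.injEq .. ▸ hq
      rw [Prod.mk.injEq, hp1, hp2, hq1, hq2, bm_inf, bm_inf]
      exact ⟨rfl, rfl⟩
  · exact ⟨⊤, ⊤, ⊥, ⊥, htop, hbot, by simp⟩
  · intro p hp; exact hp



/-- Extension of a homomorphism graph over a whole subalgebra `B`, forcing the values on a
subalgebra `S2` to be those of a given homomorphism `h'`, assuming disjointness
compatibility. -/
theorem key_step (B S2 : Set X) (C : Set Y) (h' : X → Y) (G : Set (X × Y))
    (hB : IsSubalgebraSet B) (hC : IsSubalgebraSet C) (hS2 : IsSubalgebraSet S2)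
    (hS2B : S2 ⊆ B)
    (hcomp : ∀ T ⊆ C, ∃ b ∈ C, (∀ a ∈ T, a ≤ b) ∧ ∀ c ∈ C, (∀ a ∈ T, a ≤ c) → b ≤ c)
    (hh : IsHomOn S2 h') (hhC : ∀ a ∈ S2, h' a ∈ C)
    (hG : HomGraph C G) (hdom : Gdom G ⊆ B)
    (inv : ∀ t ∈ S2, ∀ x y, (x, y) ∈ G → x ⊓ t = ⊥ → y ⊓ h' t = ⊥) :
    ∃ G', G ⊆ G' ∧ HomGraph C G' ∧ Gdom G' = B ∧ ∀ t ∈ S2, (t, h' t) ∈ G' := by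
  classical
  set 𝒮 : Set (Set (X × Y)) := {H | G ⊆ H ∧ HomGraph C H ∧ Gdom H ⊆ B ∧
    ∀ t ∈ S2, ∀ x y, (x, y) ∈ H → x ⊓ t = ⊥ → y ⊓ h' t = ⊥} with h𝒮
  have hG𝒮 : G ∈ 𝒮 := ⟨le_refl _, hG, hdom, inv⟩
  have hchain : ∀ c ⊆ 𝒮, IsChain (· ⊆ ·) c → c.Nonempty → ∃ ub ∈ 𝒮, ∀ s ∈ c, s ⊆ ub := by
    intro c hc hchain ⟨H₀, hH₀⟩
    refine ⟨⋃₀ c, ⟨?_, ⟨?_, ?_, ?_, ?_, ?_, ?_, ?_⟩, ?_, ?_⟩, fun s hs => Set.subset_sUnion_of_mem hs⟩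
    · exact le_trans (hc hH₀).1 (Set.subset_sUnion_of_mem hH₀)
    · rintro p ⟨H, hH, hp⟩
      exact (hc hH).2.1.1 p hp
    · rintro x y y' ⟨H, hH, hp⟩ ⟨H', hH', hq⟩
      rcases hchain.total hH hH' with hle | hle
      · exact (hc hH').2.1.2.1 x y y' (hle hp) hq
      · exact (hc hH).2.1.2.1 x y y' hp (hle hq)
    · exact ⟨H₀, hH₀, (hc hH₀).2.1.2.2.1⟩
    · exact ⟨H₀, hH₀, (hc hH₀).2.1.2.2.2.1⟩
    · rintro x y ⟨H, hH, hp⟩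
      exact ⟨H, hH, (hc hH).2.1.2.2.2.2.1 x y hp⟩
    · rintro x y x' y' ⟨H, hH, hp⟩ ⟨H', hH', hq⟩
      rcases hchain.total hH hH' with hle | hle
      · exact ⟨H', hH', (hc hH').2.1.2.2.2.2.2.1 x y x' y' (hle hp) hq⟩
      · exact ⟨H, hH, (hc hH).2.1.2.2.2.2.2.1 x y x' y' hp (hle hq)⟩
    · rintro x y x' y' ⟨H, hH, hp⟩ ⟨H', hH', hq⟩
      rcases hchain.total hH hH' with hle | hle
      · exact ⟨H', hH', (hc hH').2.1.2.2.2.2.2.2 x y x' y' (hle hp) hq⟩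
      · exact ⟨H, hH, (hc hH).2.1.2.2.2.2.2.2 x y x' y' hp (hle hq)⟩
    · rintro x ⟨y, H, hH, hp⟩
      exact (hc hH).2.2.1 ⟨y, hp⟩
    · rintro t ht x y ⟨H, hH, hp⟩ hxt
      exact (hc hH).2.2.2 t ht x y hp hxt
  obtain ⟨m, hGm, hm𝒮, hmax⟩ := zorn_subset_nonempty 𝒮 hchain G hG𝒮
  obtain ⟨hGm', hmH, hmdom, hminv⟩ := hm𝒮
  -- maximal element has full domain
  have hfull : Gdom m = B := by
    refine Set.Subset.antisymm hmdom ?_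
    by_contra hne
    obtain ⟨t, htB, htm⟩ : ∃ t, t ∈ B ∧ t ∉ Gdom m := by
      rcases Set.not_subset.1 hne with ⟨t, ht1, ht2⟩; exact ⟨t, ht1, ht2⟩
    -- the value to assign to t
    set T : Set Y := {s | ∃ x u r, (x, u) ∈ m ∧ r ∈ S2 ∧ x ⊓ r ≤ t ∧ s = u ⊓ h' r} with hT
    have hTC : T ⊆ C := by
      rintro s ⟨x, u, r, hxu, hr, _, rfl⟩
      exact hC.2.2.2.2 u (hmH.1 (x, u) hxu) _ (hhC r hr)
    obtain ⟨v, hvC, hvub, hvlub⟩ := hcomp T hTC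
    have star1 : ∀ x y, (x, y) ∈ m → x ⊓ t = ⊥ → y ⊓ v = ⊥ := by
      intro c y hcy hct
      have : v ≤ yᶜ := by
        refine hvlub yᶜ (hC.2.2.1 y (hmH.1 (c, y) hcy)) ?_
        rintro s ⟨x, u, r, hxu, hr, hxr, rfl⟩
        -- (x ⊓ c) ⊓ r = ⊥ since x ⊓ r ≤ t and c ⊓ t = ⊥
        have hxc : (x ⊓ c, u ⊓ y) ∈ m := hmH.2.2.2.2.2.2 x u c y hxu hcy
        have hd : (x ⊓ c) ⊓ r = ⊥ := by
          rw [inf_right_comm, ← le_bot_iff]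
          calc x ⊓ r ⊓ c ≤ t ⊓ c := inf_le_inf_right c hxr
          _ = ⊥ := by rw [inf_comm]; exact hct
        have := hminv r hr _ _ hxc hd
        -- (u ⊓ y) ⊓ h' r = ⊥  ⟹  u ⊓ h' r ≤ yᶜ
        have h2 : (u ⊓ h' r) ⊓ y = ⊥ := by rw [inf_right_comm]; exact this
        exact bm_le_compl.1 h2
      rw [← le_bot_iff]
      calc y ⊓ v ≤ y ⊓ yᶜ := inf_le_inf_left y this
      _ = ⊥ := by simp
    have star2 : ∀ x y, (x, y) ∈ m → x ≤ t → y ≤ v := by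
      intro x y hxy hxt
      have : y ⊓ h' ⊤ ∈ T := ⟨x, y, ⊤, hxy, hS2.2.1, by simpa using hxt, rfl⟩
      have h2 := hvub _ this
      rwa [hh.2.1, inf_top_eq] at h2
    obtain ⟨G', hmG', hG'H, htv, hG'rep⟩ := extend_one hC hmH t v hvC star1 star2
    have hG'𝒮 : G' ∈ 𝒮 := by
      refine ⟨le_trans hGm' hmG', hG'H, ?_, ?_⟩
      · rintro x ⟨y, hp⟩
        obtain ⟨a, u, b, w, ha, hb, hpe⟩ := hG'rep (x, y) hp
        obtain ⟨hp1, _⟩ := Prod.mk.injEq .. ▸ hpe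
        rw [hp1]
        have haB : a ∈ B := hmdom ⟨u, ha⟩
        have hbB : b ∈ B := hmdom ⟨w, hb⟩
        exact hB.2.2.2.1 _ (hB.2.2.2.2 a haB t htB) _
          (hB.2.2.2.2 b hbB tᶜ (hB.2.2.1 t htB))
      · rintro t' ht' x y hp hxt'
        obtain ⟨a, u, b, w, ha, hb, hpe⟩ := hG'rep (x, y) hp
        obtain ⟨hp1, hp2⟩ := Prod.mk.injEq .. ▸ hpe
        rw [hp1] at hxt'
        have hat : a ⊓ t ⊓ t' = ⊥ := by
          rw [← le_bot_iff, ← hxt']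
          exact inf_le_inf_right t' (le_sup_left)
        have hbt : b ⊓ tᶜ ⊓ t' = ⊥ := by
          rw [← le_bot_iff, ← hxt']
          exact inf_le_inf_right t' (le_sup_right)
        have e1 : (u ⊓ v) ⊓ h' t' = ⊥ := by
          have hvle : v ≤ (u ⊓ h' t')ᶜ := by
            refine hvlub _ (hC.2.2.1 _ (hC.2.2.2.2 u (hmH.1 (a, u) ha) _ (hhC t' ht'))) ?_
            rintro s ⟨x₀, u₀, r, hx₀, hr, hx₀r, rfl⟩
            have hxa : (x₀ ⊓ a, u₀ ⊓ u) ∈ m := hmH.2.2.2.2.2.2 x₀ u₀ a u hx₀ ha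
            have hd : (x₀ ⊓ a) ⊓ (r ⊓ t') = ⊥ := by
              rw [← le_bot_iff]
              calc x₀ ⊓ a ⊓ (r ⊓ t') = (x₀ ⊓ r) ⊓ (a ⊓ t') := by
                    rw [inf_inf_inf_comm]
              _ ≤ t ⊓ (a ⊓ t') := inf_le_inf_right _ hx₀r
              _ = a ⊓ t ⊓ t' := by rw [inf_left_comm, ← inf_assoc]
              _ = ⊥ := hat
            have hrt' : r ⊓ t' ∈ S2 := hS2.2.2.2.2 r hr t' ht'
            have h3 := hminv _ hrt' _ _ hxa hd
            rw [hh.2.2.2.2 r hr t' ht'] at h3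
            -- (u₀ ⊓ u) ⊓ (h' r ⊓ h' t') = ⊥
            have h4 : (u₀ ⊓ h' r) ⊓ (u ⊓ h' t') = ⊥ := by
              rw [inf_inf_inf_comm]; exact h3
            exact bm_le_compl.1 h4
          rw [inf_right_comm, ← le_bot_iff]
          calc (u ⊓ h' t') ⊓ v ≤ (u ⊓ h' t') ⊓ (u ⊓ h' t')ᶜ := inf_le_inf_left _ hvle
          _ = ⊥ := inf_compl_eq_bot
        have e2 : (w ⊓ vᶜ) ⊓ h' t' = ⊥ := by
          have hbt' : b ⊓ t' ≤ t := by
            apply bm_le_of_inf_compl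
            rw [inf_right_comm]; exact hbt
          have : w ⊓ h' t' ∈ T := ⟨b, w, t', hb, ht', hbt', rfl⟩
          have h5 := hvub _ this
          rw [inf_right_comm]
          exact bm_inf_compl_of_le h5
        rw [hp2, inf_sup_right, e1, e2]
        simp
    have heq : G' = m := Set.Subset.antisymm (hmax hG'𝒮 hmG') hmG'
    exact htm ⟨v, heq ▸ htv⟩
  -- now the agreement on S2
  refine ⟨m, hGm, hmH, hfull, ?_⟩
  intro t ht
  have htd : t ∈ Gdom m := by rw [hfull]; exact hS2B ht
  obtain ⟨y, hy⟩ := htd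
  have h1 : h' t ≤ y := by
    have hc : (tᶜ, yᶜ) ∈ m := hmH.2.2.2.2.1 t y hy
    have h2 := hminv t ht tᶜ yᶜ hc (by simp)
    have h3 : h' t ⊓ yᶜ = ⊥ := by rw [inf_comm]; exact h2
    exact bm_le_of_inf_compl h3
  have h2 : y ≤ h' t := by
    have h3 := hminv tᶜ (hS2.2.2.1 t ht) t y hy (by simp)
    rw [hh.2.2.1 t ht] at h3
    exact bm_le_of_inf_compl h3
  have : y = h' t := le_antisymm h2 h1
  exact this ▸ hy

-- The recursively constructed increasing sequence of homomorphism graphs.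
open Classical in
noncomputable def grSeq (B1' : Ordinal.{u} → Set Y) (B2' B3' : Ordinal.{u} → Set X)
    (h : Ordinal.{u} → X → Y) : Ordinal.{u} → Set (X × Y) := fun i =>
  Ordinal.limitRecOn i ({((⊥ : X), (⊥ : Y)), ((⊤ : X), (⊤ : Y))} : Set (X × Y))
    (fun o ih =>
      if hh : ∃ G', ih ⊆ G' ∧ HomGraph (B1' (o + 1)) G' ∧ Gdom G' = B3' (o + 1) ∧
          ∀ t ∈ B2' (o + 1), (t, h (o + 1) t) ∈ G' then hh.choose else ∅)
    (fun o _ ih => ⋃ j, ⋃ (hj : j < o), ih j hj)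

theorem grSeq_zero (B1' : Ordinal.{u} → Set Y) (B2' B3' : Ordinal.{u} → Set X)
    (h : Ordinal.{u} → X → Y) :
    grSeq B1' B2' B3' h 0 = {((⊥ : X), (⊥ : Y)), ((⊤ : X), (⊤ : Y))} := by
  unfold grSeq
  rw [Ordinal.limitRecOn_zero]

open Classical in
theorem grSeq_succ (B1' : Ordinal.{u} → Set Y) (B2' B3' : Ordinal.{u} → Set X)
    (h : Ordinal.{u} → X → Y) (o : Ordinal.{u}) :
    grSeq B1' B2' B3' h (o + 1) =
      if hh : ∃ G', grSeq B1' B2' B3' h o ⊆ G' ∧ HomGraph (B1' (o + 1)) G' ∧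
          Gdom G' = B3' (o + 1) ∧ ∀ t ∈ B2' (o + 1), (t, h (o + 1) t) ∈ G'
      then hh.choose else ∅ := by
  unfold grSeq
  rw [Ordinal.add_one_eq_succ, Ordinal.limitRecOn_succ]
  rfl

theorem grSeq_limit (B1' : Ordinal.{u} → Set Y) (B2' B3' : Ordinal.{u} → Set X)
    (h : Ordinal.{u} → X → Y) {o : Ordinal.{u}} (ho : Order.IsSuccLimit o) :
    grSeq B1' B2' B3' h o = ⋃ j, ⋃ (_ : j < o), grSeq B1' B2' B3' h j := by
  unfold grSeq
  rw [Ordinal.limitRecOn_limit _ _ _ _ ho]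

end Aux

/-- extension of homomorphisms along increasing continuous chains of Boolean
algebras (`B^2_i ⊆ B^3_i` inside `X`, `B^0_i ⊆ B^1_i` inside `Y`), where each `B^1_{i+1}` is
complete, the `h_i : B^2_i → B^0_i` form an increasing chain of homomorphisms, and the
separation condition (e) holds.  Then `h_δ` extends to a homomorphism from `B^3_δ` into
`B^1_δ`. -/
theorem stmt_5 (X Y : Type u) [BooleanAlgebra X] [BooleanAlgebra Y] (δ : Ordinal.{u})
    (B0 B1 : Ordinal.{u} → Set Y) (B2 B3 : Ordinal.{u} → Set X)
    (hsub0 : ∀ i ≤ δ, IsSubalgebraSet (B0 i)) (hsub1 : ∀ i ≤ δ, IsSubalgebraSet (B1 i))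
    (hsub2 : ∀ i ≤ δ, IsSubalgebraSet (B2 i)) (hsub3 : ∀ i ≤ δ, IsSubalgebraSet (B3 i))
    (htriv : B0 0 = {⊥, ⊤} ∧ B1 0 = {⊥, ⊤} ∧ B2 0 = {⊥, ⊤} ∧ B3 0 = {⊥, ⊤})
    (hmono : ∀ i j, i ≤ j → j ≤ δ →
      B0 i ⊆ B0 j ∧ B1 i ⊆ B1 j ∧ B2 i ⊆ B2 j ∧ B3 i ⊆ B3 j)
    (hcont : ∀ i ≤ δ, Order.IsSuccLimit i →
      B0 i = (⋃ j ∈ Set.Iio i, B0 j) ∧ B1 i = (⋃ j ∈ Set.Iio i, B1 j) ∧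
      B2 i = (⋃ j ∈ Set.Iio i, B2 j) ∧ B3 i = (⋃ j ∈ Set.Iio i, B3 j))
    (hb : ∀ i ≤ δ, B0 i ⊆ B1 i ∧ B2 i ⊆ B3 i)
    (hcomplete : ∀ i < δ, ∀ S ⊆ B1 (i + 1), ∃ b ∈ B1 (i + 1),
      (∀ a ∈ S, a ≤ b) ∧ ∀ c ∈ B1 (i + 1), (∀ a ∈ S, a ≤ c) → b ≤ c)
    (h : Ordinal.{u} → X → Y)
    (hhom : ∀ i ≤ δ, IsHomOn (B2 i) (h i) ∧ ∀ a ∈ B2 i, h i a ∈ B0 i)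
    (hincr : ∀ i j, i ≤ j → j ≤ δ → ∀ a ∈ B2 i, h j a = h i a)
    (he : ∀ i < δ, ∀ x ∈ B2 (i + 1), ∀ y ∈ B3 i, x ⊓ y = ⊥ →
      ∃ z ∈ B2 i, z ⊓ y = ⊥ ∧ x ≤ z) :
    ∃ g : X → Y, IsHomOn (B3 δ) g ∧ (∀ a ∈ B3 δ, g a ∈ B1 δ) ∧
      ∀ a ∈ B2 δ, g a = h δ a := by
  classical
  obtain ⟨htriv0, htriv1, htriv2, htriv3⟩ := htriv
  set gr : Ordinal.{u} → Set (X × Y) := grSeq B1 B2 B3 h with hgr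
  have hdeg : (⊥ : X) = ⊤ → (⊥ : Y) = ⊤ := by
    intro hbt
    have h0 := (hhom 0 zero_le).1
    have h1 : h 0 ⊥ = h 0 ⊤ := by rw [hbt]
    rwa [h0.1, h0.2.1] at h1
  have main : ∀ i, i ≤ δ → HomGraph (B1 i) (gr i) ∧ Gdom (gr i) = B3 i ∧
      (∀ t ∈ B2 i, (t, h i t) ∈ gr i) ∧ ∀ j ≤ i, gr j ⊆ gr i := by
    intro i
    induction i using Ordinal.induction with
    | _ i IH =>
    intro hiδ
    rcases Ordinal.zero_or_succ_or_isSuccLimit i with rfl | ⟨k, rfl⟩ | hlim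
    · -- zero case
      have hz : gr 0 = {((⊥ : X), (⊥ : Y)), ((⊤ : X), (⊤ : Y))} := grSeq_zero B1 B2 B3 h
      have h0 := (hhom 0 zero_le).1
      refine ⟨?_, ?_, ?_, ?_⟩
      · rw [hz]
        refine ⟨?_, ?_, ?_, ?_, ?_, ?_, ?_⟩
        · intro p hp
          simp only [Set.mem_insert_iff, Set.mem_singleton_iff] at hp
          rcases hp with rfl | rfl <;> rw [htriv1] <;> simp
        · intro x y y' hp hq
          simp only [Set.mem_insert_iff, Set.mem_singleton_iff, Prod.mk.injEq] at hp hq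
          rcases hp with ⟨h1, rfl⟩ | ⟨h1, rfl⟩ <;> rcases hq with ⟨h2, rfl⟩ | ⟨h2, rfl⟩
          · rfl
          · exact hdeg (h1.symm.trans h2)
          · exact (hdeg (h2.symm.trans h1)).symm
          · rfl
        · exact Set.mem_insert _ _
        · exact Set.mem_insert_of_mem _ rfl
        · intro x y hp
          simp only [Set.mem_insert_iff, Set.mem_singleton_iff, Prod.mk.injEq] at hp ⊢
          rcases hp with ⟨rfl, rfl⟩ | ⟨rfl, rfl⟩
          · right; simp
          · left; simp
        · intro x y x' y' hp hq
          simp only [Set.mem_insert_iff, Set.mem_singleton_iff, Prod.mk.injEq] at hp hq ⊢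
          rcases hp with ⟨rfl, rfl⟩ | ⟨rfl, rfl⟩ <;> rcases hq with ⟨rfl, rfl⟩ | ⟨rfl, rfl⟩
          · left; simp
          · right; simp
          · right; simp
          · right; simp
        · intro x y x' y' hp hq
          simp only [Set.mem_insert_iff, Set.mem_singleton_iff, Prod.mk.injEq] at hp hq ⊢
          rcases hp with ⟨rfl, rfl⟩ | ⟨rfl, rfl⟩ <;> rcases hq with ⟨rfl, rfl⟩ | ⟨rfl, rfl⟩
          · left; simp
          · left; simp
          · left; simp
          · right; simp
      · rw [htriv3]
        ext x
        constructor
        · rintro ⟨y, hy⟩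
          rw [hz] at hy
          simp only [Set.mem_insert_iff, Set.mem_singleton_iff, Prod.mk.injEq] at hy
          rcases hy with ⟨rfl, -⟩ | ⟨rfl, -⟩
          · exact Set.mem_insert _ _
          · exact Set.mem_insert_of_mem _ rfl
        · intro hx
          simp only [Set.mem_insert_iff, Set.mem_singleton_iff] at hx
          rcases hx with rfl | rfl
          · exact ⟨⊥, by rw [hz]; exact Set.mem_insert _ _⟩
          · exact ⟨⊤, by rw [hz]; exact Set.mem_insert_of_mem _ rfl⟩
      · intro t ht
        rw [htriv2] at ht
        rw [hz]
        simp only [Set.mem_insert_iff, Set.mem_singleton_iff] at ht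
        rcases ht with rfl | rfl
        · rw [h0.1]; exact Set.mem_insert _ _
        · rw [h0.2.1]; exact Set.mem_insert_of_mem _ rfl
      · intro j hj
        rw [nonpos_iff_eq_zero.1 hj]
    · -- successor case
      rw [← Ordinal.add_one_eq_succ] at hiδ ⊢
      have hkk1' : k < k + 1 := by rw [Ordinal.add_one_eq_succ]; exact Order.lt_succ k
      have hkδ : k < δ := lt_of_lt_of_le hkk1' hiδ
      have hkk1 : k ≤ k + 1 := le_of_lt hkk1'
      have hkδ' : k ≤ δ := le_of_lt hkδ
      obtain ⟨ihH, ihdom, ihB2, ihchain⟩ := IH k (Order.lt_succ k) hkδ'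
      have hex : ∃ G', gr k ⊆ G' ∧ HomGraph (B1 (k + 1)) G' ∧ Gdom G' = B3 (k + 1) ∧
          ∀ t ∈ B2 (k + 1), (t, h (k + 1) t) ∈ G' := by
        refine key_step (B3 (k + 1)) (B2 (k + 1)) (B1 (k + 1)) (h (k + 1)) (gr k)
          (hsub3 _ hiδ) (hsub1 _ hiδ) (hsub2 _ hiδ) (hb _ hiδ).2
          (hcomplete k hkδ) (hhom _ hiδ).1
          (fun a ha => (hb _ hiδ).1 ((hhom _ hiδ).2 a ha))
          (ihH.mono (hmono k (k + 1) hkk1 hiδ).2.1) ?_ ?_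
        · rw [ihdom]; exact (hmono k (k + 1) hkk1 hiδ).2.2.2
        · intro t ht x y hxy hd
          have hx3 : x ∈ B3 k := by
            have : x ∈ Gdom (gr k) := ⟨y, hxy⟩
            rwa [ihdom] at this
          obtain ⟨z, hz2, hzx, htz⟩ := he k hkδ t ht x hx3 (by rw [inf_comm]; exact hd)
          have hz' : (z, h k z) ∈ gr k := ihB2 z hz2
          have h1 : h k z ⊓ y = ⊥ := ihH.disj hz' hxy hzx
          have h2 : h (k + 1) t ≤ h (k + 1) z := by
            have hz2' : z ∈ B2 (k + 1) := (hmono k (k + 1) hkk1 hiδ).2.2.1 hz2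
            have h3 := (hhom (k + 1) hiδ).1.2.2.2.2 t ht z hz2'
            rw [inf_eq_left.2 htz] at h3
            rw [h3]; exact inf_le_right
          have h3 : h (k + 1) z = h k z := hincr k (k + 1) hkk1 hiδ z hz2
          rw [← le_bot_iff]
          calc y ⊓ h (k + 1) t ≤ y ⊓ h k z := inf_le_inf_left y (h3 ▸ h2)
          _ = ⊥ := by rw [inf_comm]; exact h1
      have hval : gr (k + 1) = hex.choose := by
        show grSeq B1 B2 B3 h (k + 1) = hex.choose
        rw [grSeq_succ]
        exact dif_pos hex
      obtain ⟨hsub', hH', hdom', hB2'⟩ := hex.choose_spec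
      have hsub'' : gr k ⊆ gr (k + 1) := by rw [hval]; exact hsub'
      refine ⟨by rw [hval]; exact hH', by rw [hval]; exact hdom', by rw [hval]; exact hB2', ?_⟩
      intro j hj
      rcases eq_or_lt_of_le hj with rfl | hj'
      · exact le_refl _
      · have hjk : j ≤ k := by
          rw [Ordinal.add_one_eq_succ] at hj'
          exact Order.lt_succ_iff.1 hj'
        exact le_trans (ihchain j hjk) hsub''
    · -- limit case
      have hleq : gr i = ⋃ j, ⋃ (_ : j < i), gr j := grSeq_limit B1 B2 B3 h hlim
      have hcont' := hcont i hiδ hlim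
      have IH' : ∀ j < i, HomGraph (B1 j) (gr j) ∧ Gdom (gr j) = B3 j ∧
          (∀ t ∈ B2 j, (t, h j t) ∈ gr j) ∧ ∀ j' ≤ j, gr j' ⊆ gr j :=
        fun j hj => IH j hj (le_of_lt (lt_of_lt_of_le hj hiδ))
      have hmem : ∀ p : X × Y, p ∈ gr i ↔ ∃ j, j < i ∧ p ∈ gr j := by
        intro p
        rw [hleq]
        simp only [Set.mem_iUnion]
        constructor
        · rintro ⟨j, hj, hp⟩; exact ⟨j, hj, hp⟩
        · rintro ⟨j, hj, hp⟩; exact ⟨j, hj, hp⟩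
      refine ⟨⟨?_, ?_, ?_, ?_, ?_, ?_, ?_⟩, ?_, ?_, ?_⟩
      · intro p hp
        obtain ⟨j, hj, hp⟩ := (hmem p).1 hp
        exact (hmono j i (le_of_lt hj) hiδ).2.1 ((IH' j hj).1.1 p hp)
      · intro x y y' hp hq
        obtain ⟨j, hj, hp⟩ := (hmem _).1 hp
        obtain ⟨j', hj', hq⟩ := (hmem _).1 hq
        rcases le_total j j' with hle | hle
        · exact (IH' j' hj').1.2.1 x y y' ((IH' j' hj').2.2.2 j hle hp) hq
        · exact (IH' j hj).1.2.1 x y y' hp ((IH' j hj).2.2.2 j' hle hq)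
      · exact (hmem _).2 ⟨0, hlim.pos, (IH' 0 hlim.pos).1.2.2.1⟩
      · exact (hmem _).2 ⟨0, hlim.pos, (IH' 0 hlim.pos).1.2.2.2.1⟩
      · intro x y hp
        obtain ⟨j, hj, hp⟩ := (hmem _).1 hp
        exact (hmem _).2 ⟨j, hj, (IH' j hj).1.2.2.2.2.1 x y hp⟩
      · intro x y x' y' hp hq
        obtain ⟨j, hj, hp⟩ := (hmem _).1 hp
        obtain ⟨j', hj', hq⟩ := (hmem _).1 hq
        rcases le_total j j' with hle | hle
        · exact (hmem _).2 ⟨j', hj', (IH' j' hj').1.2.2.2.2.2.1 x y x' y'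
            ((IH' j' hj').2.2.2 j hle hp) hq⟩
        · exact (hmem _).2 ⟨j, hj, (IH' j hj).1.2.2.2.2.2.1 x y x' y' hp
            ((IH' j hj).2.2.2 j' hle hq)⟩
      · intro x y x' y' hp hq
        obtain ⟨j, hj, hp⟩ := (hmem _).1 hp
        obtain ⟨j', hj', hq⟩ := (hmem _).1 hq
        rcases le_total j j' with hle | hle
        · exact (hmem _).2 ⟨j', hj', (IH' j' hj').1.2.2.2.2.2.2 x y x' y'
            ((IH' j' hj').2.2.2 j hle hp) hq⟩
        · exact (hmem _).2 ⟨j, hj, (IH' j hj).1.2.2.2.2.2.2 x y x' y' hp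
            ((IH' j hj).2.2.2 j' hle hq)⟩
      · ext x
        constructor
        · rintro ⟨y, hy⟩
          obtain ⟨j, hj, hp⟩ := (hmem _).1 hy
          have : x ∈ B3 j := by
            have hx : x ∈ Gdom (gr j) := ⟨y, hp⟩
            rwa [(IH' j hj).2.1] at hx
          exact (hmono j i (le_of_lt hj) hiδ).2.2.2 this
        · intro hx
          rw [hcont'.2.2.2] at hx
          simp only [Set.mem_iUnion, Set.mem_Iio] at hx
          obtain ⟨j, hj, hx⟩ := hx
          have : x ∈ Gdom (gr j) := by rw [(IH' j hj).2.1]; exact hx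
          obtain ⟨y, hy⟩ := this
          exact ⟨y, (hmem _).2 ⟨j, hj, hy⟩⟩
      · intro t ht
        rw [hcont'.2.2.1] at ht
        simp only [Set.mem_iUnion, Set.mem_Iio] at ht
        obtain ⟨j, hj, ht⟩ := ht
        have h1 : h i t = h j t := hincr j i (le_of_lt hj) hiδ t ht
        rw [h1]
        exact (hmem _).2 ⟨j, hj, (IH' j hj).2.2.1 t ht⟩
      · intro j hj
        rcases eq_or_lt_of_le hj with rfl | hj'
        · exact le_refl _
        · intro p hp
          exact (hmem _).2 ⟨j, hj', hp⟩
  obtain ⟨hHδ, hdomδ, hB2δ, -⟩ := main δ le_rfl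
  set g : X → Y := fun x => if hx : ∃ y, (x, y) ∈ gr δ then hx.choose else ⊥ with hgdef
  have hg_mem : ∀ x y, (x, y) ∈ gr δ → g x = y := by
    intro x y hxy
    have hx : ∃ y', (x, y') ∈ gr δ := ⟨y, hxy⟩
    have : g x = hx.choose := by rw [hgdef]; exact dif_pos hx
    rw [this]
    exact hHδ.2.1 x _ y hx.choose_spec hxy
  have hg_graph : ∀ x, x ∈ B3 δ → (x, g x) ∈ gr δ := by
    intro x hx
    have hx' : ∃ y, (x, y) ∈ gr δ := by
      rw [← hdomδ] at hx; exact hx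
    have hc := hx'.choose_spec
    have : g x = hx'.choose := hg_mem x _ hc
    rw [this]; exact hc
  refine ⟨g, ⟨?_, ?_, ?_, ?_, ?_⟩, ?_, ?_⟩
  · exact hg_mem ⊥ ⊥ hHδ.2.2.1
  · exact hg_mem ⊤ ⊤ hHδ.2.2.2.1
  · intro a ha
    exact hg_mem _ _ (hHδ.2.2.2.2.1 a (g a) (hg_graph a ha))
  · intro a ha b hbm
    exact hg_mem _ _ (hHδ.2.2.2.2.2.1 a (g a) b (g b) (hg_graph a ha) (hg_graph b hbm))
  · intro a ha b hbm
    exact hg_mem _ _ (hHδ.2.2.2.2.2.2 a (g a) b (g b) (hg_graph a ha) (hg_graph b hbm))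
  · intro a ha
    exact hHδ.1 (a, g a) (hg_graph a ha)
  · intro a ha
    exact hg_mem a (h δ a) (hB2δ a ha)
end

section
/- Assume κ = cf(μ) < μ and μ < 2^{<μ}, and set χ = Σ_{θ<μ} (2^θ)⁺. Then every Boolean algebra B of cardinality at least χ has a homomorphic image B' with μ ≤ |B'| < χ. -/
universe u

open Cardinal

/-- A homomorphism of Boolean algebras. -/
def IsBoolHom {α : Type u} {β : Type u} [BooleanAlgebra α] [BooleanAlgebra β]
    (f : α → β) : Prop :=
  f ⊥ = ⊥ ∧ f ⊤ = ⊤ ∧ (∀ a b, f (a ⊔ b) = f a ⊔ f b) ∧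
    (∀ a b, f (a ⊓ b) = f a ⊓ f b) ∧ ∀ a, f aᶜ = (f a)ᶜ

namespace Stmt6Aux

variable {B : Type u} [BooleanAlgebra B]

def IsH (u : B → Bool) : Prop :=
  u ⊥ = false ∧ u ⊤ = true ∧ (∀ a b, u (a ⊔ b) = (u a || u b)) ∧
    (∀ a b, u (a ⊓ b) = (u a && u b)) ∧ ∀ a, u aᶜ = !(u a)

set_option maxHeartbeats 1000000 in
theorem exists_sep {b c : B} (h : b ≠ c) : ∃ u : B → Bool, IsH u ∧ u b ≠ u c := by
  classical
  set d : B := symmDiff b c with hd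
  have hdbot : d ≠ ⊥ := fun hh => h (symmDiff_eq_bot.mp hh)
  set r : B → AsBoolRing B := fun x => toBoolRing x with hr
  have hrd : (1 : AsBoolRing B) + r d ∉ (⊥ : Ideal (AsBoolRing B)) ∨ True := Or.inr trivial
  have hproper : Ideal.span {(1 : AsBoolRing B) + r d} ≠ ⊤ := by
    intro htop
    have h1 : (1 : AsBoolRing B) ∈ Ideal.span {(1 : AsBoolRing B) + r d} := by
      rw [htop]; trivial
    rw [Ideal.mem_span_singleton] at h1
    obtain ⟨y, hy⟩ := h1
    have : r d = 0 := by
      have h2 : r d * 1 = r d * ((1 + r d) * y) := by rw [← hy]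
      have h3 : r d * (1 + r d) = 0 := BooleanRing.mul_one_add_self _
      rw [mul_one, ← mul_assoc, h3, zero_mul] at h2
      exact h2
    have : d = ⊥ := by
      have := congrArg ofBoolRing this
      rwa [ofBoolRing_toBoolRing, ofBoolRing_zero] at this
    exact hdbot this
  obtain ⟨m, hm, hle⟩ := Ideal.exists_le_maximal _ hproper
  let φ : AsBoolRing B →+* (AsBoolRing B ⧸ m) := Ideal.Quotient.mk m
  have hchar : (1 : AsBoolRing B ⧸ m) + 1 = 0 := by
    have : φ (1 + 1) = φ 0 := by rw [BooleanRing.add_self]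
    simpa using this
  have hvals : ∀ x : AsBoolRing B ⧸ m, x = 0 ∨ x = 1 := by
    intro x
    obtain ⟨rr, rfl⟩ := Ideal.Quotient.mk_surjective x
    have hid : φ rr * φ rr = φ rr := by
      rw [← map_mul, BooleanRing.mul_self]
    have : φ rr * (φ rr - 1) = 0 := by rw [mul_sub, mul_one, hid, sub_self]
    rcases mul_eq_zero.mp this with h0 | h1
    · exact Or.inl h0
    · exact Or.inr (by linear_combination h1)
  set v : B → AsBoolRing B ⧸ m := fun a => φ (r a) with hv
  have hv_top : v ⊤ = 1 := by rw [hv]; simp only [hr, toBoolRing_top]; exact map_one φ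
  have hv_bot : v ⊥ = 0 := by rw [hv]; simp only [hr, toBoolRing_bot]; exact map_zero φ
  have hv_inf : ∀ a b : B, v (a ⊓ b) = v a * v b := by
    intro a b; rw [hv]; simp only [hr, toBoolRing_inf]; exact map_mul φ _ _
  have hv_symm : ∀ a b : B, v (symmDiff a b) = v a + v b := by
    intro a b; rw [hv]; simp only [hr, toBoolRing_symmDiff]; exact map_add φ _ _
  have hv_compl : ∀ a : B, v aᶜ = v a + 1 := by
    intro a
    have : (aᶜ : B) = symmDiff a ⊤ := (symmDiff_top a).symm
    rw [this, hv_symm, hv_top]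
  have hv_sup : ∀ a b : B, v (a ⊔ b) = v a * v b + (v a + v b) := by
    intro a b
    have h1 : (a ⊔ b : B) = (aᶜ ⊓ bᶜ)ᶜ := by rw [compl_inf, compl_compl, compl_compl]
    rw [h1, hv_compl, hv_inf, hv_compl, hv_compl]
    have : (v a + 1) * (v b + 1) + 1 = v a * v b + (v a + v b) + (1 + 1) := by ring
    rw [this, hchar, add_zero]
  have hone : (1 : AsBoolRing B ⧸ m) ≠ 0 := one_ne_zero
  refine ⟨fun a => decide (v a = 1), ⟨?_, ?_, ?_, ?_, ?_⟩, ?_⟩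
  · simp [hv_bot, hone]
  · simp [hv_top]
  · intro a b
    rcases hvals (v a) with ha | ha <;> rcases hvals (v b) with hb | hb <;>
      simp [hv_sup, ha, hb, hchar, hone]
  · intro a b
    rcases hvals (v a) with ha | ha <;> rcases hvals (v b) with hb | hb <;>
      simp [hv_inf, ha, hb, hone]
  · intro a
    rcases hvals (v a) with ha | ha <;> simp [hv_compl, ha, hchar, hone, zero_add]
  · -- v d = 1, so v b ≠ v c
    have hmem : (1 : AsBoolRing B) + r d ∈ m := hle (Ideal.subset_span rfl)
    have hφ : φ (1 + r d) = 0 := (Ideal.Quotient.eq_zero_iff_mem).mpr hmem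
    have hvd : v d = 1 := by
      have : (1 : AsBoolRing B ⧸ m) + v d = 0 := by
        rw [hv]; rw [← map_one φ, ← map_add]; exact hφ
      have h2 : v d = -1 := by linear_combination this
      rw [h2, neg_eq_of_add_eq_zero_left hchar]
    have hbc : v b + v c = 1 := by rw [← hv_symm, ← hd, hvd]
    intro heq
    have : v b = v c := by
      rcases hvals (v b) with h1 | h1 <;> rcases hvals (v c) with h2 | h2 <;>
        simp [h1, h2] at heq ⊢
    rw [this] at hbc
    have : (1 : AsBoolRing B ⧸ m) = 0 := by
      rcases hvals (v c) with h1 | h1 <;> rw [h1] at hbc <;> simp_all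
    exact hone this

variable (hne : Nonempty {u : B → Bool // IsH u})

open scoped Classical in
noncomputable def pt : Ordinal.{u} → {u : B → Bool // IsH u} :=
  Ordinal.lt_wf.fix fun α ih =>
    if h : ∃ u : {u : B → Bool // IsH u}, ∃ b c : B,
        (∀ β (hβ : β < α), (ih β hβ).1 b = (ih β hβ).1 c) ∧ u.1 b ≠ u.1 c
    then h.choose else Classical.choice hne

/-- agreement on all coordinates below `α` -/
def E (α : Ordinal.{u}) (b c : B) : Prop :=
  ∀ β, β < α → (pt hne β).1 b = (pt hne β).1 c

theorem pt_spec (α : Ordinal.{u}) (h : ∃ b c : B, b ≠ c ∧ E hne α b c) :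
    ∃ b c : B, E hne α b c ∧ (pt hne α).1 b ≠ (pt hne α).1 c := by
  obtain ⟨b, c, hbc, hE⟩ := h
  obtain ⟨u, hu, hsep⟩ := exists_sep hbc
  have hcond : ∃ u' : {u : B → Bool // IsH u}, ∃ b c : B,
      (∀ β (hβ : β < α), (pt hne β).1 b = (pt hne β).1 c) ∧ u'.1 b ≠ u'.1 c :=
    ⟨⟨u, hu⟩, b, c, hE, hsep⟩
  have hpt : pt hne α = hcond.choose := by
    unfold pt
    rw [WellFounded.fix_eq]
    exact dif_pos hcond
  rw [hpt]
  obtain ⟨b', c', h1, h2⟩ := hcond.choose_spec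
  exact ⟨b', c', h1, h2⟩

def St (α : Ordinal.{u}) : Setoid B :=
  ⟨E hne α, ⟨fun _ _ _ => rfl, fun h β hβ => (h β hβ).symm,
    fun h1 h2 β hβ => (h1 β hβ).trans (h2 β hβ)⟩⟩

noncomputable def qc (α : Ordinal.{u}) : Cardinal.{u} := #(Quotient (St hne α))

theorem qc_mono {α γ : Ordinal.{u}} (hαγ : α ≤ γ) : qc hne α ≤ qc hne γ := by
  apply Cardinal.mk_le_of_surjective
    (f := Quotient.lift (fun b : B => (⟦b⟧ : Quotient (St hne α)))
      (fun b c h => Quotient.sound (fun β hβ => (show E hne γ b c from h) β (hβ.trans_le hαγ))))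
  intro x
  obtain ⟨b, rfl⟩ := Quotient.exists_rep x
  exact ⟨⟦b⟧, rfl⟩

theorem qc_succ (α : Ordinal.{u}) : qc hne (Order.succ α) ≤ qc hne α * 2 := by
  have hwd : ∀ b c : B, @Setoid.r _ (St hne (Order.succ α)) b c →
      ((⟦b⟧ : Quotient (St hne α)), (pt hne α).1 b) = (⟦c⟧, (pt hne α).1 c) := by
    intro b c h
    refine Prod.ext ?_ ?_
    · exact Quotient.sound (fun β hβ => h β (hβ.trans (Order.lt_succ α)))
    · exact h α (Order.lt_succ α)
  have hinj : Function.Injective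
      (Quotient.lift (fun b : B => ((⟦b⟧ : Quotient (St hne α)), (pt hne α).1 b)) hwd) := by
    intro x y
    obtain ⟨b, rfl⟩ := Quotient.exists_rep x
    obtain ⟨c, rfl⟩ := Quotient.exists_rep y
    intro hxy
    simp only [Quotient.lift_mk, Prod.mk.injEq] at hxy
    refine Quotient.sound (fun β hβ => ?_)
    rcases (Order.lt_succ_iff.mp hβ).lt_or_eq with h | h
    · exact Quotient.exact hxy.1 β h
    · subst h; exact hxy.2
  calc qc hne (Order.succ α) ≤ #(Quotient (St hne α) × Bool) :=
        Cardinal.mk_le_of_injective hinj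
    _ = qc hne α * 2 := by
        rw [Cardinal.mk_prod, Cardinal.mk_bool]
        simp [qc]

theorem qc_limit {δ : Ordinal.{u}} (hδ : Order.IsSuccLimit δ) {μ : Cardinal.{u}}
    (hqlt : ∀ α, α < δ → qc hne α < μ) : qc hne δ ≤ μ ^ δ.cof := by
  obtain ⟨ι, f, hlsub, hcard⟩ := Ordinal.exists_lsub_cof δ
  have hwd : ∀ b c : B, @Setoid.r _ (St hne δ) b c →
      (fun i : ι => (⟦b⟧ : Quotient (St hne (Order.succ (f i))))) =
      (fun i : ι => (⟦c⟧ : Quotient (St hne (Order.succ (f i))))) := by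
    intro b c h
    funext i
    refine Quotient.sound (fun β hβ => h β ?_)
    have h1 : f i < δ := by rw [← hlsub]; exact Ordinal.lt_lsub f i
    exact lt_of_lt_of_le hβ (Order.succ_le_of_lt h1)
  have hinj : Function.Injective (Quotient.lift
      (fun b : B => fun i : ι => (⟦b⟧ : Quotient (St hne (Order.succ (f i))))) hwd) := by
    intro x y
    obtain ⟨b, rfl⟩ := Quotient.exists_rep x
    obtain ⟨c, rfl⟩ := Quotient.exists_rep y
    intro hxy
    simp only [Quotient.lift_mk] at hxy
    refine Quotient.sound (fun β hβ => ?_)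
    have : β < Ordinal.lsub f := by rw [hlsub]; exact hβ
    obtain ⟨i, hi⟩ := Ordinal.lt_lsub_iff.mp this
    exact Quotient.exact (congrFun hxy i) β (Order.lt_succ_iff.mpr hi)
  calc qc hne δ ≤ #(∀ i : ι, Quotient (St hne (Order.succ (f i)))) :=
        Cardinal.mk_le_of_injective hinj
    _ = Cardinal.prod (fun i : ι => qc hne (Order.succ (f i))) := Cardinal.mk_pi _
    _ ≤ Cardinal.prod (fun _ : ι => μ) := by
        apply Cardinal.prod_le_prod
        intro i
        have h1 : f i < δ := by rw [← hlsub]; exact Ordinal.lt_lsub f i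
        exact (hqlt _ (hδ.succ_lt h1)).le
    _ = μ ^ #ι := Cardinal.prod_const' ι μ
    _ = μ ^ δ.cof := by rw [hcard]

theorem exists_pair {α : Ordinal.{u}} (hq : qc hne α < #B) :
    ∃ b c : B, b ≠ c ∧ E hne α b c := by
  by_contra hcon
  push_neg at hcon
  have hinj : Function.Injective (Quotient.mk (St hne α)) := by
    intro b c hbc
    by_contra hne'
    exact hcon b c hne' (Quotient.exact hbc)
  exact absurd (Cardinal.mk_le_of_injective hinj) (not_le.mpr hq)

/-! ### The quotient Boolean algebra at stage `δ` -/

section QBA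

variable (δ : Ordinal.{u})

private theorem ptE {α : Ordinal.{u}} {b c : B} (h : @Setoid.r _ (St hne α) b c) :
    E hne α b c := h

private theorem ptE' {α : Ordinal.{u}} {b c : B} (h : E hne α b c) :
    @Setoid.r _ (St hne α) b c := h

private theorem msup : ∀ (a b : B), @Setoid.r _ (St hne δ) a b → ∀ (c d : B),
    @Setoid.r _ (St hne δ) c d → @Setoid.r _ (St hne δ) (a ⊔ c) (b ⊔ d) := by
  intro a b hab c d hcd
  refine ptE' hne (fun β hβ => ?_)
  rw [(pt hne β).2.2.2.1 a c, (pt hne β).2.2.2.1 b d,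
    ptE hne hab β hβ, ptE hne hcd β hβ]

private theorem minf : ∀ (a b : B), @Setoid.r _ (St hne δ) a b → ∀ (c d : B),
    @Setoid.r _ (St hne δ) c d → @Setoid.r _ (St hne δ) (a ⊓ c) (b ⊓ d) := by
  intro a b hab c d hcd
  refine ptE' hne (fun β hβ => ?_)
  rw [(pt hne β).2.2.2.2.1 a c, (pt hne β).2.2.2.2.1 b d,
    ptE hne hab β hβ, ptE hne hcd β hβ]

private theorem mcompl : ∀ (a b : B), @Setoid.r _ (St hne δ) a b →
    @Setoid.r _ (St hne δ) aᶜ bᶜ := by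
  intro a b hab
  refine ptE' hne (fun β hβ => ?_)
  rw [(pt hne β).2.2.2.2.2 a, (pt hne β).2.2.2.2.2 b, ptE hne hab β hβ]

private theorem msdiff : ∀ (a b : B), @Setoid.r _ (St hne δ) a b → ∀ (c d : B),
    @Setoid.r _ (St hne δ) c d → @Setoid.r _ (St hne δ) (a \ c) (b \ d) := by
  intro a b hab c d hcd
  rw [sdiff_eq, sdiff_eq]
  exact minf hne δ a b hab _ _ (mcompl hne δ c d hcd)

private theorem mhimp : ∀ (a b : B), @Setoid.r _ (St hne δ) a b → ∀ (c d : B),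
    @Setoid.r _ (St hne δ) c d → @Setoid.r _ (St hne δ) (a ⇨ c) (b ⇨ d) := by
  intro a b hab c d hcd
  rw [himp_eq, himp_eq]
  exact msup hne δ c d hcd _ _ (mcompl hne δ a b hab)

noncomputable def qsup : Quotient (St hne δ) → Quotient (St hne δ) → Quotient (St hne δ) :=
  Quotient.map₂ (· ⊔ ·) (msup hne δ)

noncomputable def qinf : Quotient (St hne δ) → Quotient (St hne δ) → Quotient (St hne δ) :=
  Quotient.map₂ (· ⊓ ·) (minf hne δ)

noncomputable def qcompl : Quotient (St hne δ) → Quotient (St hne δ) :=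
  Quotient.map (·ᶜ) (mcompl hne δ)

noncomputable def qsdiff : Quotient (St hne δ) → Quotient (St hne δ) → Quotient (St hne δ) :=
  Quotient.map₂ (· \ ·) (msdiff hne δ)

noncomputable def qhimp : Quotient (St hne δ) → Quotient (St hne δ) → Quotient (St hne δ) :=
  Quotient.map₂ (· ⇨ ·) (mhimp hne δ)

/-- The coordinate set -/
def CS : Set {u : B → Bool // IsH u} := pt hne '' Set.Iio δ

/-- The evaluation embedding into a power of `Bool`. -/
noncomputable def emap : Quotient (St hne δ) → (↥(CS hne δ) → Bool) :=
  Quotient.lift (fun b => fun i => i.1.1 b) (by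
    intro a b h
    funext i
    obtain ⟨β, hβ, hpti⟩ := i.2
    show i.1.1 a = i.1.1 b
    rw [← hpti]
    exact ptE hne h β hβ)

private theorem emap_mk (b : B) : emap hne δ ⟦b⟧ = fun i => i.1.1 b := rfl

private theorem emap_inj : Function.Injective (emap hne δ) := by
  intro x y
  obtain ⟨b, rfl⟩ := Quotient.exists_rep x
  obtain ⟨c, rfl⟩ := Quotient.exists_rep y
  intro hxy
  refine Quotient.sound (ptE' hne (fun β hβ => ?_))
  have := congrFun hxy ⟨pt hne β, ⟨β, hβ, rfl⟩⟩
  exact this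

private theorem bool_sup : ∀ x y : Bool, (x ⊔ y) = (x || y) := by decide
private theorem bool_inf : ∀ x y : Bool, (x ⊓ y) = (x && y) := by decide
private theorem bool_compl : ∀ x : Bool, xᶜ = !x := by decide

private theorem emap_sup (x y : Quotient (St hne δ)) :
    emap hne δ (qsup hne δ x y) = emap hne δ x ⊔ emap hne δ y := by
  obtain ⟨b, rfl⟩ := Quotient.exists_rep x
  obtain ⟨c, rfl⟩ := Quotient.exists_rep y
  funext i
  show i.1.1 (b ⊔ c) = (emap hne δ ⟦b⟧ ⊔ emap hne δ ⟦c⟧) i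
  rw [Pi.sup_apply, emap_mk, emap_mk, i.1.2.2.2.1 b c, bool_sup]

private theorem emap_inf (x y : Quotient (St hne δ)) :
    emap hne δ (qinf hne δ x y) = emap hne δ x ⊓ emap hne δ y := by
  obtain ⟨b, rfl⟩ := Quotient.exists_rep x
  obtain ⟨c, rfl⟩ := Quotient.exists_rep y
  funext i
  show i.1.1 (b ⊓ c) = (emap hne δ ⟦b⟧ ⊓ emap hne δ ⟦c⟧) i
  rw [Pi.inf_apply, emap_mk, emap_mk, i.1.2.2.2.2.1 b c, bool_inf]

private theorem emap_compl (x : Quotient (St hne δ)) :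
    emap hne δ (qcompl hne δ x) = (emap hne δ x)ᶜ := by
  obtain ⟨b, rfl⟩ := Quotient.exists_rep x
  funext i
  show i.1.1 bᶜ = (emap hne δ ⟦b⟧)ᶜ i
  rw [Pi.compl_apply, emap_mk, i.1.2.2.2.2.2 b, bool_compl]

private theorem emap_top : emap hne δ ⟦⊤⟧ = ⊤ := by
  funext i
  show i.1.1 ⊤ = (⊤ : ↥(CS hne δ) → Bool) i
  rw [Pi.top_apply, i.1.2.2.1]
  decide

private theorem emap_bot : emap hne δ ⟦⊥⟧ = ⊥ := by
  funext i
  show i.1.1 ⊥ = (⊥ : ↥(CS hne δ) → Bool) i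
  rw [Pi.bot_apply, i.1.2.1]
  decide

private theorem emap_sdiff (x y : Quotient (St hne δ)) :
    emap hne δ (qsdiff hne δ x y) = emap hne δ x \ emap hne δ y := by
  obtain ⟨b, rfl⟩ := Quotient.exists_rep x
  obtain ⟨c, rfl⟩ := Quotient.exists_rep y
  have h1 : qsdiff hne δ ⟦b⟧ ⟦c⟧ = ⟦b ⊓ cᶜ⟧ := by
    show (⟦b \ c⟧ : Quotient (St hne δ)) = ⟦b ⊓ cᶜ⟧
    rw [sdiff_eq]
  rw [h1, sdiff_eq]
  have h2 : (⟦b ⊓ cᶜ⟧ : Quotient (St hne δ)) = qinf hne δ ⟦b⟧ (qcompl hne δ ⟦c⟧) := rfl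
  rw [h2, emap_inf, emap_compl]

private theorem emap_himp (x y : Quotient (St hne δ)) :
    emap hne δ (qhimp hne δ x y) = emap hne δ x ⇨ emap hne δ y := by
  obtain ⟨b, rfl⟩ := Quotient.exists_rep x
  obtain ⟨c, rfl⟩ := Quotient.exists_rep y
  have h1 : qhimp hne δ ⟦b⟧ ⟦c⟧ = ⟦c ⊔ bᶜ⟧ := by
    show (⟦b ⇨ c⟧ : Quotient (St hne δ)) = ⟦c ⊔ bᶜ⟧
    rw [himp_eq]
  rw [h1, himp_eq]
  have h2 : (⟦c ⊔ bᶜ⟧ : Quotient (St hne δ)) = qsup hne δ ⟦c⟧ (qcompl hne δ ⟦b⟧) := rfl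
  rw [h2, emap_sup, emap_compl]

noncomputable def QBA : BooleanAlgebra (Quotient (St hne δ)) :=
  letI : Max (Quotient (St hne δ)) := ⟨qsup hne δ⟩
  letI : Min (Quotient (St hne δ)) := ⟨qinf hne δ⟩
  letI : Top (Quotient (St hne δ)) := ⟨⟦⊤⟧⟩
  letI : Bot (Quotient (St hne δ)) := ⟨⟦⊥⟧⟩
  letI : Compl (Quotient (St hne δ)) := ⟨qcompl hne δ⟩
  letI : SDiff (Quotient (St hne δ)) := ⟨qsdiff hne δ⟩
  letI : HImp (Quotient (St hne δ)) := ⟨qhimp hne δ⟩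
  letI : LE (Quotient (St hne δ)) := ⟨fun x y => emap hne δ x ≤ emap hne δ y⟩
  letI : LT (Quotient (St hne δ)) := ⟨fun x y => emap hne δ x < emap hne δ y⟩
  Function.Injective.booleanAlgebra (emap hne δ) (emap_inj hne δ) Iff.rfl Iff.rfl
    (emap_sup hne δ) (emap_inf hne δ) (emap_top hne δ) (emap_bot hne δ)
    (emap_compl hne δ) (emap_sdiff hne δ) (emap_himp hne δ)

theorem QBA_hom : @IsBoolHom B (Quotient (St hne δ)) _ (QBA hne δ)
    (Quotient.mk (St hne δ)) := by
  refine ⟨rfl, rfl, fun a b => rfl, fun a b => rfl, fun a => rfl⟩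

end QBA

end Stmt6Aux


open Stmt6Aux

/-- Assume `κ = cf(μ) < μ` and `μ < 2^{<μ}`, and set
`χ = Σ_{θ<μ} (2^θ)⁺` (a sum of an increasing family, i.e. the supremum
`⨆_{θ<μ} (2^θ)⁺`).  Then every Boolean algebra of cardinality at least `χ` has a
homomorphic image `B'` with `μ ≤ |B'| < χ`. -/
theorem stmt_6 (μ κ : Cardinal.{u}) (hμ : ℵ₀ ≤ μ)
    (hκ : κ = (Cardinal.ord μ).cof) (hκμ : κ < μ)
    (hμpow : μ < (2 : Cardinal.{u}) ^< μ)
    (χ : Cardinal.{u})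
    (hχ : χ = ⨆ θ : Set.Iio μ, Order.succ ((2 : Cardinal.{u}) ^ θ.val))
    (B : Type u) [BooleanAlgebra B] (hB : χ ≤ #B) :
    ∃ (B' : Type u) (inst : BooleanAlgebra B') (f : B → B'),
      @IsBoolHom B B' _ inst f ∧ Function.Surjective f ∧ μ ≤ #B' ∧ #B' < χ := by
  classical
  have hℵμ : ℵ₀ < μ :=
    lt_of_le_of_lt (Ordinal.aleph0_le_cof.mpr (Cardinal.isSuccLimit_ord hμ)) (hκ ▸ hκμ)
  have hx : ∃ x, x < μ ∧ μ < 2 ^ x := by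
    by_contra hcon
    push_neg at hcon
    exact absurd (Cardinal.powerlt_le.mpr fun x hx => hcon x hx) (not_le.mpr hμpow)
  obtain ⟨x, hxμ, hμx⟩ := hx
  set θ₀ := max x ℵ₀ with hθ₀def
  have hθ₀ : ℵ₀ ≤ θ₀ := le_max_right _ _
  have hθμ : θ₀ < μ := max_lt hxμ hℵμ
  have hμθ : μ ≤ 2 ^ θ₀ :=
    hμx.le.trans (Cardinal.power_le_power_left two_ne_zero (le_max_left _ _))
  have hsuccle : ∀ θ : Cardinal.{u}, θ < μ → Order.succ ((2 : Cardinal.{u}) ^ θ) ≤ χ := by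
    intro θ hθ
    rw [hχ]
    exact le_ciSup (Cardinal.bddAbove_range _) (⟨θ, hθ⟩ : Set.Iio μ)
  have hμχ : μ ≤ χ := le_trans (hμθ.trans (Order.le_succ _)) (hsuccle θ₀ hθμ)
  have hμB : μ ≤ #B := hμχ.trans hB
  have hnontriv : Nontrivial B :=
    Cardinal.one_lt_iff_nontrivial.mp (lt_of_lt_of_le (lt_of_lt_of_le one_lt_aleph0 hμ) hμB)
  obtain ⟨b0, c0, hb0c0⟩ := hnontriv
  obtain ⟨u0, hu0, -⟩ := exists_sep hb0c0
  have hne : Nonempty {u : B → Bool // IsH u} := ⟨⟨u0, hu0⟩⟩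
  -- the quotient at stage `ord μ` has at least `μ` classes
  have hstop : μ ≤ qc hne (Cardinal.ord μ) := by
    by_contra hlt
    push_neg at hlt
    have hall : ∀ α : Ordinal.{u}, α ≤ Cardinal.ord μ → qc hne α < μ :=
      fun α hα => lt_of_le_of_lt (qc_mono hne hα) hlt
    have hpairs : ∀ α : Set.Iio (Cardinal.ord μ), ∃ bc : B × B,
        E hne α.1 bc.1 bc.2 ∧ (pt hne α.1).1 bc.1 ≠ (pt hne α.1).1 bc.2 := by
      intro α
      have h1 : qc hne α.1 < #B := lt_of_lt_of_le (hall α.1 α.2.le) hμB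
      obtain ⟨b, c, hbc, hEbc⟩ := exists_pair hne h1
      obtain ⟨b', c', h1', h2'⟩ := pt_spec hne α.1 ⟨b, c, hbc, hEbc⟩
      exact ⟨(b', c'), h1', h2'⟩
    choose g hg1 hg2 using hpairs
    have hFinj : Function.Injective (fun α : Set.Iio (Cardinal.ord μ) =>
        (⟨((⟦(g α).1⟧ : Quotient (St hne (Cardinal.ord μ))), (⟦(g α).2⟧ :
          Quotient (St hne (Cardinal.ord μ))))⟩ : ULift.{u+1} _)) := by
      have key : ∀ α β : Set.Iio (Cardinal.ord μ), α.1 < β.1 →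
          ((⟦(g α).1⟧ : Quotient (St hne (Cardinal.ord μ))), (⟦(g α).2⟧ :
            Quotient (St hne (Cardinal.ord μ)))) ≠ (⟦(g β).1⟧, ⟦(g β).2⟧) := by
        intro α β hαβ hFe
        have e1 : E hne (Cardinal.ord μ) (g α).1 (g β).1 :=
          Quotient.exact (congrArg Prod.fst hFe)
        have e2 : E hne (Cardinal.ord μ) (g α).2 (g β).2 :=
          Quotient.exact (congrArg Prod.snd hFe)
        apply hg2 α
        calc (pt hne α.1).1 (g α).1
            = (pt hne α.1).1 (g β).1 := e1 α.1 α.2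
          _ = (pt hne α.1).1 (g β).2 := hg1 β α.1 hαβ
          _ = (pt hne α.1).1 (g α).2 := (e2 α.1 α.2).symm
      intro α β hFe
      have hFe' : ((⟦(g α).1⟧ : Quotient (St hne (Cardinal.ord μ))), (⟦(g α).2⟧ :
          Quotient (St hne (Cardinal.ord μ)))) = (⟦(g β).1⟧, ⟦(g β).2⟧) :=
        congrArg ULift.down hFe
      rcases lt_trichotomy α.1 β.1 with h | h | h
      · exact absurd hFe' (key α β h)
      · exact Subtype.ext h
      · exact absurd hFe'.symm (key β α h)
    have hcard := Cardinal.mk_le_of_injective hFinj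
    rw [Ordinal.mk_Iio_ordinal, Cardinal.mk_uLift, Cardinal.card_ord] at hcard
    have hQQ : μ ≤ #(Quotient (St hne (Cardinal.ord μ)) × Quotient (St hne (Cardinal.ord μ))) :=
      Cardinal.lift_le.mp hcard
    have hQQ2 : #(Quotient (St hne (Cardinal.ord μ)) × Quotient (St hne (Cardinal.ord μ)))
        = qc hne (Cardinal.ord μ) * qc hne (Cardinal.ord μ) := by
      rw [Cardinal.mk_prod, Cardinal.lift_id]
      rfl
    rw [hQQ2] at hQQ
    rcases lt_or_ge (qc hne (Cardinal.ord μ)) ℵ₀ with hfin | hinf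
    · exact absurd (hQQ.trans_lt (Cardinal.mul_lt_aleph0 hfin hfin)) (not_lt.mpr hμ)
    · rw [Cardinal.mul_eq_self hinf] at hQQ
      exact absurd hQQ (not_le.mpr hlt)
  -- the first stage with at least `μ` classes
  have hSne : {δ : Ordinal.{u} | δ ≤ Cardinal.ord μ ∧ μ ≤ qc hne δ}.Nonempty :=
    ⟨Cardinal.ord μ, le_rfl, hstop⟩
  set δ := sInf {δ : Ordinal.{u} | δ ≤ Cardinal.ord μ ∧ μ ≤ qc hne δ} with hδdef
  have hδS : δ ≤ Cardinal.ord μ ∧ μ ≤ qc hne δ := csInf_mem hSne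
  have hqlt : ∀ α, α < δ → qc hne α < μ := by
    intro α hα
    by_contra hge
    push_neg at hge
    have h2 : δ ≤ α := csInf_le' ⟨hα.le.trans hδS.1, hge⟩
    exact absurd hα (not_lt.mpr h2)
  rcases Ordinal.zero_or_succ_or_isSuccLimit δ with h0 | hsucc | hlim
  · exfalso
    have hsub : Subsingleton (Quotient (St hne δ)) := ⟨by
      intro xx yy
      obtain ⟨b, rfl⟩ := Quotient.exists_rep xx
      obtain ⟨c, rfl⟩ := Quotient.exists_rep yy
      refine Quotient.sound (fun β hβ => absurd hβ ?_)
      rw [h0]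
      exact not_lt_zero (a := β)⟩
    have h1 : qc hne δ ≤ 1 := Cardinal.le_one_iff_subsingleton.mpr hsub
    exact absurd (hδS.2.trans h1) (not_le.mpr (lt_of_lt_of_le one_lt_aleph0 hμ))
  · exfalso
    obtain ⟨β, hβ⟩ : ∃ β, δ = Order.succ β := by
      obtain ⟨β, hβ⟩ := hsucc; exact ⟨β, hβ.symm⟩
    have hβδ : β < δ := by rw [hβ]; exact Order.lt_succ β
    have h1 : qc hne δ ≤ qc hne β * 2 := by rw [hβ]; exact qc_succ hne β
    have h2 : qc hne β * 2 < μ := by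
      rw [mul_two]
      exact Cardinal.add_lt_of_lt hμ (hqlt β hβδ) (hqlt β hβδ)
    exact absurd hδS.2 (not_le.mpr (lt_of_le_of_lt h1 h2))
  · have hcofδ : δ.cof < μ := by
      rcases eq_or_lt_of_le hδS.1 with heq | hlt2
      · rw [heq]
        exact hκ ▸ hκμ
      · exact lt_of_le_of_lt (Ordinal.cof_le_card δ) (Cardinal.lt_ord.mp hlt2)
    have hcofℵ : ℵ₀ ≤ δ.cof := Ordinal.aleph0_le_cof.mpr hlim
    have hq1 : qc hne δ ≤ μ ^ δ.cof := qc_limit hne hlim hqlt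
    have hq2 : μ ^ δ.cof ≤ 2 ^ (θ₀ * δ.cof) := by
      rw [Cardinal.power_mul]
      exact Cardinal.power_le_power_right hμθ
    have hθ'μ : θ₀ * δ.cof < μ := by
      rw [Cardinal.mul_eq_max hθ₀ hcofℵ]
      exact max_lt hθμ hcofδ
    have hfin : qc hne δ < χ :=
      lt_of_le_of_lt (hq1.trans hq2)
        (lt_of_lt_of_le (Order.lt_succ _) (hsuccle _ hθ'μ))
    exact ⟨Quotient (St hne δ), QBA hne δ, Quotient.mk _, QBA_hom hne δ,
      fun xx => Quotient.exists_rep xx, hδS.2, hfin⟩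
end

section
/- Let μ be a singular cardinal and B a Boolean algebra such that for every cardinal θ < μ, B contains an antichain (a family of pairwise disjoint nonzero elements) of cardinality θ. Then B contains an antichain of cardinality μ. -/
universe u

open Cardinal

section ET

variable {B : Type u} [BooleanAlgebra B]

/-- Antichain predicate. -/
def IsAC (A : Set B) : Prop :=
  (∀ a ∈ A, a ≠ ⊥) ∧ A.Pairwise fun a b => a ⊓ b = ⊥

/-- Antichain whose elements lie below `b`. -/
def ACle (b : B) (A : Set B) : Prop := IsAC A ∧ ∀ a ∈ A, a ≤ b

lemma IsAC.mono {A A' : Set B} (h : IsAC A) (hs : A' ⊆ A) : IsAC A' :=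
  ⟨fun a ha => h.1 a (hs ha), h.2.mono hs⟩

lemma ACle_empty (b : B) : ACle b (∅ : Set B) :=
  ⟨⟨fun a ha => absurd ha (Set.notMem_empty a), Set.pairwise_empty _⟩,
    fun a ha => absurd ha (Set.notMem_empty a)⟩

/-- `sB b` : sup of cardinalities of antichains below `b`. -/
noncomputable def sB (b : B) : Cardinal.{u} :=
  sSup {θ | ∃ A : Set B, ACle b A ∧ #A = θ}

lemma sB_bdd (b : B) : BddAbove {θ | ∃ A : Set B, ACle b A ∧ #A = θ} := by
  refine ⟨#B, fun θ hθ => ?_⟩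
  obtain ⟨A, _, rfl⟩ := hθ
  exact Cardinal.mk_set_le A

lemma le_sB {b : B} {A : Set B} (h : ACle b A) : #A ≤ sB b :=
  le_csSup (sB_bdd b) ⟨A, h, rfl⟩

lemma exists_of_lt_sB {b : B} {θ : Cardinal.{u}} (h : θ < sB b) :
    ∃ A : Set B, ACle b A ∧ θ ≤ #A := by
  by_contra hc
  push_neg at hc
  have : sB b ≤ θ := by
    refine csSup_le ⟨0, ∅, ACle_empty b, by simp⟩ ?_
    rintro x ⟨A, hA, rfl⟩
    exact le_of_lt (lt_of_not_ge fun hle => absurd hle (by simpa using hc A hA))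
  exact absurd h (not_lt_of_ge this)

lemma sB_mono {b c : B} (hbc : b ≤ c) : sB b ≤ sB c := by
  refine csSup_le_csSup (sB_bdd c) ⟨0, ∅, ACle_empty b, by simp⟩ ?_
  rintro x ⟨A, hA, rfl⟩
  exact ⟨A, ⟨hA.1, fun a ha => (hA.2 a ha).trans hbc⟩, rfl⟩

/-- A stable element: `sB` is constant below it. -/
def Stable (v : B) : Prop := v ≠ ⊥ ∧ ∀ w : B, w ≠ ⊥ → w ≤ v → sB w = sB v

lemma stable_dense {u : B} (hu : u ≠ ⊥) : ∃ v, v ≤ u ∧ Stable v := by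
  set S : Set Cardinal.{u} := {θ | ∃ w : B, w ≠ ⊥ ∧ w ≤ u ∧ sB w = θ} with hS
  have hne : S.Nonempty := ⟨sB u, u, hu, le_rfl, rfl⟩
  obtain ⟨v, hv0, hvu, hveq⟩ := csInf_mem hne
  refine ⟨v, hvu, hv0, fun w hw0 hwv => ?_⟩
  have h1 : sB w ≤ sB v := sB_mono hwv
  have h2 : sInf S ≤ sB w := csInf_le (OrderBot.bddBelow S) ⟨w, hw0, hwv.trans hvu, rfl⟩
  rw [hveq] at *
  exact le_antisymm h1 h2

/-- Union of antichains below pairwise-disjoint elements. -/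
lemma union_AC {ι : Type u} (b : ι → B) (hdisj : ∀ i j, i ≠ j → b i ⊓ b j = ⊥)
    (A : ι → Set B) (hA : ∀ i, ACle (b i) (A i)) {v : B} (hb : ∀ i, b i ≤ v) :
    ACle v (⋃ i, A i) ∧ Cardinal.sum (fun i => #(A i)) ≤ #(⋃ i, A i) := by
  have hsets : Pairwise (Function.onFun Disjoint A) := by
    intro i j hij
    have : Disjoint (A i) (A j) := by
      rw [Set.disjoint_left]
      intro x hxi hxj
      have hx : x ≤ b i ⊓ b j := le_inf ((hA i).2 x hxi) ((hA j).2 x hxj)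
      rw [hdisj i j hij] at hx
      exact (hA i).1.1 x hxi (le_bot_iff.mp hx)
    exact this
  constructor
  · refine ⟨⟨?_, ?_⟩, ?_⟩
    · rintro a ha
      obtain ⟨i, hi⟩ := Set.mem_iUnion.mp ha
      exact (hA i).1.1 a hi
    · rintro x hx y hy hxy
      obtain ⟨i, hi⟩ := Set.mem_iUnion.mp hx
      obtain ⟨j, hj⟩ := Set.mem_iUnion.mp hy
      by_cases hij : i = j
      · subst hij
        exact (hA i).1.2 hi hj hxy
      · have hle : x ⊓ y ≤ b i ⊓ b j := inf_le_inf ((hA i).2 x hi) ((hA j).2 y hj)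
        rw [hdisj i j hij] at hle
        exact le_bot_iff.mp hle
    · rintro a ha
      obtain ⟨i, hi⟩ := Set.mem_iUnion.mp ha
      exact ((hA i).2 a hi).trans (hb i)
  · rw [Cardinal.mk_iUnion_eq_sum_mk hsets]

/-- Below a stable element, one can realize a sum of small cardinals as an antichain. -/
lemma stable_sum {v : B} (hv : Stable v) {ι : Type u} (κ : ι → Cardinal.{u})
    (hι : #ι < sB v) (hκ : ∀ i, κ i < sB v) :
    ∃ A : Set B, ACle v A ∧ Cardinal.sum κ ≤ #A := by
  obtain ⟨A0, hA0, hA0card⟩ := exists_of_lt_sB hι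
  obtain ⟨e⟩ := (Cardinal.le_def _ _).mp hA0card
  set a : ι → B := fun i => ((e i : A0) : B) with ha
  have ha_mem : ∀ i, a i ∈ A0 := fun i => (e i).2
  have ha_ne : ∀ i j, i ≠ j → a i ≠ a j := by
    intro i j hij hEq
    exact hij (e.injective (Subtype.ext hEq))
  have hdisj : ∀ i j, i ≠ j → a i ⊓ a j = ⊥ :=
    fun i j hij => hA0.1.2 (ha_mem i) (ha_mem j) (ha_ne i j hij)
  have hstab : ∀ i, sB (a i) = sB v :=
    fun i => hv.2 (a i) (hA0.1.1 _ (ha_mem i)) (hA0.2 _ (ha_mem i))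
  have hAi : ∀ i, ∃ A : Set B, ACle (a i) A ∧ κ i ≤ #A := by
    intro i
    exact exists_of_lt_sB (by rw [hstab i]; exact hκ i)
  choose A hA hAcard using hAi
  obtain ⟨hun, hcard⟩ := union_AC a hdisj A hA (fun i => hA0.2 _ (ha_mem i))
  exact ⟨⋃ i, A i, hun, le_trans (Cardinal.sum_le_sum _ _ hAcard) hcard⟩

end ET

lemma succ_lt_of_sing {μ : Cardinal.{u}} (hμ : ℵ₀ ≤ μ) (hsing : (Cardinal.ord μ).cof < μ)
    {c : Cardinal.{u}} (hc : c < μ) : Order.succ c < μ := by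
  rcases lt_or_eq_of_le (Order.succ_le_of_lt hc) with h | h
  · exact h
  · exfalso
    have hinf : ℵ₀ ≤ c := by
      by_contra hfin
      push_neg at hfin
      have h1 : Order.succ c ≤ ℵ₀ := Order.succ_le_of_lt hfin
      rw [h] at h1
      exact absurd (le_antisymm h1 hμ) (by
        intro hEq
        rw [hEq] at hsing
        exact absurd Cardinal.isRegular_aleph0.2 (not_le_of_gt hsing))
    have hreg := Cardinal.isRegular_succ hinf
    rw [h] at hreg
    exact absurd hreg.2 (not_le_of_gt hsing)

lemma le_of_forall_lt_le {μ x : Cardinal.{u}} (hμ : ℵ₀ ≤ μ)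
    (hsing : (Cardinal.ord μ).cof < μ) (h : ∀ c < μ, c ≤ x) : μ ≤ x := by
  by_contra hc
  push_neg at hc
  have h1 : Order.succ x < μ := succ_lt_of_sing hμ hsing hc
  exact absurd (h _ h1) (not_le_of_gt (Order.lt_succ x))

lemma aleph0_lt_of_sing {μ : Cardinal.{u}} (hμ : ℵ₀ ≤ μ)
    (hsing : (Cardinal.ord μ).cof < μ) : ℵ₀ < μ := by
  rcases lt_or_eq_of_le hμ with h | h
  · exact h
  · exfalso
    rw [← h] at hsing
    exact absurd Cardinal.isRegular_aleph0.2 (not_le_of_gt hsing)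

/-- A cofinal family of cardinals below a singular `μ`. -/
lemma exists_cof_family (μ : Cardinal.{u}) :
    ∃ (ι : Type u) (κ : ι → Cardinal.{u}), #ι = (Cardinal.ord μ).cof ∧
      (∀ i, κ i < μ) ∧ ∀ c < μ, ∃ i, c ≤ κ i := by
  obtain ⟨ι, f, hlsub, hcard⟩ := Ordinal.exists_lsub_cof (Cardinal.ord μ)
  refine ⟨ι, fun i => (f i).card, hcard, fun i => ?_, fun c hc => ?_⟩
  · rw [← Cardinal.lt_ord, ← hlsub]
    exact Ordinal.lt_lsub f i
  · have : c.ord < Ordinal.lsub f := by rw [hlsub]; exact Cardinal.ord_lt_ord.mpr hc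
    obtain ⟨i, hi⟩ := Ordinal.lt_lsub_iff.mp this
    exact ⟨i, by simpa [Cardinal.card_ord] using Ordinal.card_le_card hi⟩

/-- Erdős–Tarski: If `μ` is a singular cardinal and the Boolean algebra `B`
has antichains of every cardinality `θ < μ`, then `B` has an antichain of cardinality `μ`. -/
theorem stmt_7 (μ : Cardinal.{u}) (hμ : ℵ₀ ≤ μ) (hsing : (Cardinal.ord μ).cof < μ)
    (B : Type u) [BooleanAlgebra B]
    (h : ∀ θ : Cardinal.{u}, θ < μ → ∃ A : Set B,
      #A = θ ∧ (∀ a ∈ A, a ≠ ⊥) ∧ A.Pairwise fun a b => a ⊓ b = ⊥) :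
    ∃ A : Set B, #A = μ ∧ (∀ a ∈ A, a ≠ ⊥) ∧ A.Pairwise fun a b => a ⊓ b = ⊥ := by
  classical
  -- final shrinking helper
  have shrink : ∀ (A : Set B), IsAC A → μ ≤ #A →
      ∃ A' : Set B, #A' = μ ∧ (∀ a ∈ A', a ≠ ⊥) ∧ A'.Pairwise fun a b => a ⊓ b = ⊥ := by
    intro A hA hle
    obtain ⟨A', hsub, hcard⟩ := Cardinal.le_mk_iff_exists_subset.mp hle
    exact ⟨A', hcard, (hA.mono hsub).1, (hA.mono hsub).2⟩
  -- maximal antichain of stable elements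
  have hzorn : ∀ c ⊆ {A : Set B | IsAC A ∧ ∀ a ∈ A, Stable a}, IsChain (· ⊆ ·) c →
      ∃ ub ∈ {A : Set B | IsAC A ∧ ∀ a ∈ A, Stable a}, ∀ s ∈ c, s ⊆ ub := by
    intro c hcS hchain
    refine ⟨⋃₀ c, ⟨⟨?_, ?_⟩, ?_⟩, fun s hs => Set.subset_sUnion_of_mem hs⟩
    · rintro a ⟨t, ht, hat⟩
      exact (hcS ht).1.1 a hat
    · rintro x ⟨t, ht, hxt⟩ y ⟨t', ht', hyt'⟩ hxy
      rcases eq_or_ne t t' with rfl | htt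
      · exact (hcS ht).1.2 hxt hyt' hxy
      rcases hchain ht ht' htt with hsub | hsub
      · exact (hcS ht').1.2 (hsub hxt) hyt' hxy
      · exact (hcS ht).1.2 hxt (hsub hyt') hxy
    · rintro a ⟨t, ht, hat⟩
      exact (hcS ht).2 a hat
  obtain ⟨W, hWmax⟩ := zorn_subset {A : Set B | IsAC A ∧ ∀ a ∈ A, Stable a} hzorn
  obtain ⟨hWac, hWst⟩ := hWmax.1
  -- density of W
  have hWdense : ∀ b : B, b ≠ ⊥ → ∃ w ∈ W, b ⊓ w ≠ ⊥ := by
    intro b hb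
    by_contra hc
    push_neg at hc
    obtain ⟨v, hvb, hvstab⟩ := stable_dense hb
    have hvW : v ∉ W := by
      intro hvW
      have : v ⊓ v = ⊥ := by
        have := hc v hvW
        exact le_bot_iff.mp (le_trans (inf_le_inf hvb le_rfl) this.le)
      exact hvstab.1 (by simpa using this)
    have hins : insert v W ∈ {A : Set B | IsAC A ∧ ∀ a ∈ A, Stable a} := by
      refine ⟨⟨?_, ?_⟩, ?_⟩
      · rintro a (rfl | haW)
        · exact hvstab.1
        · exact hWac.1 a haW
      · rintro x (rfl | hxW) y (rfl | hyW) hxy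
        · exact absurd rfl hxy
        · exact le_bot_iff.mp ((inf_le_inf hvb le_rfl).trans (hc y hyW).le)
        · rw [inf_comm]
          exact le_bot_iff.mp ((inf_le_inf hvb le_rfl).trans (hc x hxW).le)
        · exact hWac.2 hxW hyW hxy
      · rintro a (rfl | haW)
        · exact hvstab
        · exact hWst a haW
    have := hWmax.2 hins (Set.subset_insert v W)
    exact hvW (this (Set.mem_insert v W))
  -- counting bound
  set S' : Cardinal.{u} := ⨆ w : W, sB (w : B) with hS'
  have hS'bdd : BddAbove (Set.range fun w : W => sB (w : B)) := by
    refine ⟨#B, ?_⟩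
    rintro x ⟨w, rfl⟩
    exact csSup_le ⟨0, ∅, ACle_empty _, by simp⟩ (by rintro x ⟨A, _, rfl⟩; exact Cardinal.mk_set_le A)
  have hcount : ∀ (A : Set B), IsAC A → #A ≤ #W * S' := by
    intro A hA
    have hg : ∀ a : A, ∃ w : W, (a : B) ⊓ (w : B) ≠ ⊥ := by
      rintro ⟨a, ha⟩
      obtain ⟨w, hwW, hw⟩ := hWdense a (hA.1 a ha)
      exact ⟨⟨w, hwW⟩, hw⟩
    choose g hgspec using hg
    have h1 : #A = Cardinal.sum fun w : W => #{a : A // g a = w} := by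
      rw [← Cardinal.mk_sigma]
      exact Cardinal.mk_congr (Equiv.sigmaFiberEquiv g).symm
    have h2 : ∀ w : W, #{a : A // g a = w} ≤ sB (w : B) := by
      intro w
      set f : {a : A // g a = w} → B := fun p => ((p.1 : B)) ⊓ (w : B) with hf
      have hfne : ∀ p, f p ≠ ⊥ := by
        rintro ⟨a, ha⟩
        simp only [hf]
        rw [← ha]
        exact hgspec a
      have hfinj : Function.Injective f := by
        rintro ⟨a, ha⟩ ⟨a', ha'⟩ hEq
        by_contra hne
        have hcoe : (a : B) ≠ (a' : B) := by
          intro hcc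
          exact hne (Subtype.ext (Subtype.ext hcc))
        have hbot : (a : B) ⊓ (a' : B) = ⊥ := hA.2 a.2 a'.2 hcoe
        have : f ⟨a, ha⟩ ≤ (a : B) ⊓ (a' : B) := by
          refine le_inf inf_le_left ?_
          rw [hEq]
          exact inf_le_left
        rw [hbot] at this
        exact hfne ⟨a, ha⟩ (le_bot_iff.mp this)
      have hrange : ACle (w : B) (Set.range f) := by
        refine ⟨⟨?_, ?_⟩, ?_⟩
        · rintro x ⟨p, rfl⟩; exact hfne p
        · rintro x ⟨p, rfl⟩ y ⟨q, rfl⟩ hxy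
          have hpq : (p.1 : B) ≠ (q.1 : B) := by
            intro hcc
            exact hxy (by simp [hf, hcc])
          have hbot : (p.1 : B) ⊓ (q.1 : B) = ⊥ := hA.2 p.1.2 q.1.2 hpq
          refine le_bot_iff.mp ?_
          calc f p ⊓ f q ≤ (p.1 : B) ⊓ (q.1 : B) := inf_le_inf inf_le_left inf_le_left
            _ = ⊥ := hbot
        · rintro x ⟨p, rfl⟩; exact inf_le_right
      calc #{a : A // g a = w} = #(Set.range f) := (Cardinal.mk_range_eq f hfinj).symm
        _ ≤ sB (w : B) := le_sB hrange
    calc #A = Cardinal.sum fun w : W => #{a : A // g a = w} := h1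
      _ ≤ Cardinal.sum fun w : W => sB (w : B) := Cardinal.sum_le_sum _ _ h2
      _ ≤ Cardinal.sum fun _ : W => S' := Cardinal.sum_le_sum _ _ (fun w => le_ciSup hS'bdd w)
      _ = #W * S' := Cardinal.sum_const' _ _
  have hμbound : μ ≤ #W * S' := by
    refine le_of_forall_lt_le hμ hsing (fun c hc => ?_)
    obtain ⟨A, hAcard, hA1, hA2⟩ := h c hc
    rw [← hAcard]
    exact hcount A ⟨hA1, hA2⟩
  by_cases hWbig : μ ≤ #W
  · exact shrink W ⟨hWac.1, hWac.2⟩ hWbig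
  push_neg at hWbig
  have hμS' : μ ≤ S' := by
    have hb := hμbound.trans (Cardinal.mul_le_max #W S')
    by_contra hS'lt
    push_neg at hS'lt
    have h1 : max (max #W S') ℵ₀ < μ := by
      rw [max_lt_iff, max_lt_iff]
      exact ⟨⟨hWbig, hS'lt⟩, aleph0_lt_of_sing hμ hsing⟩
    exact absurd hb (not_le_of_gt h1)
  obtain ⟨ι, κ, hιcard, hκlt, hκcof⟩ := exists_cof_family μ
  have hι_lt_μ : #ι < μ := by rw [hιcard]; exact hsing
  by_cases hbig : ∃ w : W, μ ≤ sB (w : B)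
  · -- some stable element carries antichains of all sizes < μ
    obtain ⟨w, hw⟩ := hbig
    have hwst : Stable (w : B) := hWst w w.2
    obtain ⟨A, hA, hAcard⟩ := stable_sum hwst κ (lt_of_lt_of_le hι_lt_μ hw)
      (fun i => lt_of_lt_of_le (hκlt i) hw)
    refine shrink A hA.1 ?_
    refine le_of_forall_lt_le hμ hsing (fun c hc => ?_)
    obtain ⟨i, hi⟩ := hκcof c hc
    exact hi.trans ((Cardinal.le_sum κ i).trans hAcard)
  · push_neg at hbig
    have hexists : ∀ w : {w : W // #ι < sB (w : B)},
        ∃ A : Set B, ACle ((w.1 : W) : B) A ∧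
          Cardinal.sum (fun i : {i : ι // κ i < sB ((w.1 : W) : B)} => κ i.1) ≤ #A := by
      intro w
      refine stable_sum (hWst _ w.1.2) _ ?_ (fun i => i.2)
      exact lt_of_le_of_lt (Cardinal.mk_subtype_le _) w.2
    choose A hA hAcard using hexists
    have hdisj : ∀ (x y : {w : W // #ι < sB (w : B)}), x ≠ y →
        ((x.1 : W) : B) ⊓ ((y.1 : W) : B) = ⊥ := by
      intro x y hxy
      refine hWac.2 x.1.2 y.1.2 ?_
      intro hEq
      exact hxy (Subtype.ext (Subtype.ext hEq))
    obtain ⟨hun, hcard⟩ := union_AC (fun w : {w : W // #ι < sB (w : B)} => ((w.1 : W) : B))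
      hdisj A hA (v := ⊤) (fun _ => le_top)
    refine shrink _ hun.1 ?_
    refine le_of_forall_lt_le hμ hsing (fun c hc => ?_)
    obtain ⟨i, hi⟩ := hκcof c hc
    have h2 : max (κ i) #ι < μ := max_lt (hκlt i) hι_lt_μ
    have h3 : ∃ w : W, max (κ i) #ι < sB (w : B) := by
      by_contra hcon
      push_neg at hcon
      have hne : Nonempty W := by
        by_contra hemp
        rw [not_nonempty_iff] at hemp
        have hz : S' = 0 := by rw [hS']; exact ciSup_of_empty _
        rw [hz] at hμS'
        have : μ = 0 := le_antisymm hμS' zero_le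
        rw [this] at hμ
        exact Cardinal.aleph0_ne_zero (le_antisymm hμ zero_le)
      haveI := hne
      have hle : S' ≤ max (κ i) #ι := ciSup_le hcon
      exact absurd (hμS'.trans hle) (not_le_of_gt h2)
    obtain ⟨w, hw⟩ := h3
    rw [max_lt_iff] at hw
    have hi' : κ i ≤ Cardinal.sum (fun j : {j : ι // κ j < sB ((w : W) : B)} => κ j.1) :=
      Cardinal.le_sum (fun j : {j : ι // κ j < sB ((w : W) : B)} => κ j.1) ⟨i, hw.1⟩
    calc c ≤ κ i := hi
      _ ≤ _ := hi'
      _ ≤ #(A ⟨w, hw.2⟩) := hAcard ⟨w, hw.2⟩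
      _ ≤ Cardinal.sum (fun w' => #(A w')) :=
        Cardinal.le_sum (fun w' : {w : W // #ι < sB (w : B)} => #(A w')) ⟨w, hw.2⟩
      _ ≤ _ := hcard
end

section
/- Let σ be an infinite cardinal, B_σ the free Boolean algebra on generators {x_α : α < σ}, and B^c_σ its completion. Then there is a Boolean algebra homomorphism f from B^c_σ into the power set algebra P(σ) such that f(x_α) = {α} for every α < σ, and for every b ∈ B^c_σ the set f(b) is either countable or co-countable in σ. -/
universe u

open Cardinal

/-- Membership in the Boolean subalgebra generated by a set. -/
inductive BoolGen {α : Type u} [BooleanAlgebra α] (s : Set α) : α → Prop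
  | base {a : α} : a ∈ s → BoolGen s a
  | bot : BoolGen s ⊥
  | top : BoolGen s ⊤
  | sup {a b : α} : BoolGen s a → BoolGen s b → BoolGen s (a ⊔ b)
  | inf {a b : α} : BoolGen s a → BoolGen s b → BoolGen s (a ⊓ b)
  | compl {a : α} : BoolGen s a → BoolGen s aᶜ

namespace Stmt8

variable {ι : Type u} {Bc : Type u} [CompleteBooleanAlgebra Bc] [DecidableEq ι]

/-- elementary product -/
def atom (x : ι → Bc) (u s : Finset ι) : Bc :=
  s.inf x ⊓ (u \ s).inf (fun i => (x i)ᶜ)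

variable {x : ι → Bc}

theorem atom_ne_bot
    (hindep : ∀ s t : Finset ι, Disjoint s t → s.inf x ⊓ t.inf (fun i => (x i)ᶜ) ≠ ⊥)
    {u s : Finset ι} (hs : s ⊆ u) : atom x u s ≠ ⊥ :=
  hindep s (u \ s) Finset.disjoint_sdiff

theorem atom_inf_x {u s : Finset ι} {α : ι} (hα : α ∉ u) (hs : s ⊆ u) :
    atom x u s ⊓ x α = atom x (insert α u) (insert α s) := by
  have hαs : α ∉ s := fun h => hα (hs h)
  have h1 : insert α u \ insert α s = u \ s := by
    ext β
    simp only [Finset.mem_sdiff, Finset.mem_insert, not_or]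
    by_cases hβ : β = α
    · subst hβ; tauto
    · tauto
  rw [atom, atom, h1, Finset.inf_insert]
  ac_rfl

theorem atom_inf_xc {u s : Finset ι} {α : ι} (hα : α ∉ u) (hs : s ⊆ u) :
    atom x u s ⊓ (x α)ᶜ = atom x (insert α u) s := by
  have hαs : α ∉ s := fun h => hα (hs h)
  have h1 : insert α u \ s = insert α (u \ s) := by
    ext β
    simp only [Finset.mem_sdiff, Finset.mem_insert]
    by_cases hβ : β = α
    · subst hβ; tauto
    · tauto
  rw [atom, atom, h1, Finset.inf_insert]
  ac_rfl

theorem atom_empty : atom x ∅ ∅ = ⊤ := by simp [atom]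

theorem atom_singleton (i : ι) : atom x {i} {i} = x i := by
  simp [atom]

/-- the sup of all atoms over `u` is `⊤` -/
theorem sup_atom_powerset (u : Finset ι) :
    u.powerset.sup (atom x u) = ⊤ := by
  induction u using Finset.induction_on with
  | empty => simp [atom]
  | @insert a u ha ih =>
    rw [Finset.powerset_insert, Finset.sup_union, Finset.sup_image]
    have h1 : u.powerset.sup (atom x (insert a u)) =
        u.powerset.sup fun s => atom x u s ⊓ (x a)ᶜ := by
      apply Finset.sup_congr rfl
      intro s hs
      rw [atom_inf_xc ha (Finset.mem_powerset.mp hs)]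
    have h2 : u.powerset.sup (atom x (insert a u) ∘ insert a) =
        u.powerset.sup fun s => atom x u s ⊓ x a := by
      apply Finset.sup_congr rfl
      intro s hs
      simp only [Function.comp_apply]
      rw [atom_inf_x ha (Finset.mem_powerset.mp hs)]
    rw [h1, h2, ← Finset.sup_inf_distrib_right, ← Finset.sup_inf_distrib_right, ih]
    simp

theorem atom_inf_atom_eq_bot {u s s' : Finset ι} (hs : s ⊆ u) (hs' : s' ⊆ u)
    (hne : s ≠ s') : atom x u s ⊓ atom x u s' = ⊥ := by
  have : ∃ β, (β ∈ s ∧ β ∉ s') ∨ (β ∈ s' ∧ β ∉ s) := by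
    by_contra h
    push_neg at h
    refine hne (Finset.ext fun β => ?_)
    have := h β
    tauto
  obtain ⟨β, ⟨h1, h2⟩ | ⟨h1, h2⟩⟩ := this
  · have l1 : atom x u s ≤ x β := le_trans inf_le_left (Finset.inf_le h1)
    have l2 : atom x u s' ≤ (x β)ᶜ :=
      le_trans inf_le_right (Finset.inf_le (Finset.mem_sdiff.mpr ⟨hs h1, h2⟩))
    exact le_bot_iff.mp (le_trans (inf_le_inf l1 l2) (by simp))
  · have l1 : atom x u s' ≤ x β := le_trans inf_le_left (Finset.inf_le h1)
    have l2 : atom x u s ≤ (x β)ᶜ :=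
      le_trans inf_le_right (Finset.inf_le (Finset.mem_sdiff.mpr ⟨hs' h1, h2⟩))
    exact le_bot_iff.mp (le_trans (inf_le_inf l2 l1) (by simp [inf_comm]))


/-- `c` is a sup of atoms over `u` -/
def Based (x : ι → Bc) (u : Finset ι) (c : Bc) : Prop :=
  ∃ F : Finset (Finset ι), (∀ s ∈ F, s ⊆ u) ∧ c = F.sup (atom x u)

theorem based_bot (u : Finset ι) : Based x u (⊥ : Bc) :=
  ⟨∅, by simp, by simp⟩

theorem based_top (u : Finset ι) : Based x u (⊤ : Bc) :=
  ⟨u.powerset,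
    fun s hs => Finset.mem_powerset.mp hs, (sup_atom_powerset u).symm⟩

theorem based_x (i : ι) : Based x {i} (x i) :=
  ⟨{{i}}, by simp, by simp [atom_singleton]⟩

theorem based_sup {u : Finset ι} {b c : Bc} (hb : Based x u b) (hc : Based x u c) :
    Based x u (b ⊔ c) := by
  obtain ⟨F, hF, rfl⟩ := hb
  obtain ⟨G, hG, rfl⟩ := hc
  exact ⟨F ∪ G, fun s hs => (Finset.mem_union.mp hs).elim (hF s) (hG s),
    (Finset.sup_union).symm⟩

theorem based_inf {u : Finset ι} {b c : Bc} (hb : Based x u b) (hc : Based x u c) :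
    Based x u (b ⊓ c) := by
  obtain ⟨F, hF, rfl⟩ := hb
  obtain ⟨G, hG, rfl⟩ := hc
  refine ⟨F ∩ G, fun s hs => hF s (Finset.mem_of_mem_inter_left hs), ?_⟩
  apply le_antisymm
  · rw [Finset.sup_inf_distrib_right]
    apply Finset.sup_le
    intro s hsF
    rw [Finset.sup_inf_distrib_left]
    apply Finset.sup_le
    intro t htG
    by_cases hst : s = t
    · subst hst
      rw [inf_idem]
      exact Finset.le_sup (Finset.mem_inter.mpr ⟨hsF, htG⟩)
    · rw [atom_inf_atom_eq_bot (hF s hsF) (hG t htG) hst]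
      exact bot_le
  · exact le_inf (Finset.sup_mono Finset.inter_subset_left)
      (Finset.sup_mono Finset.inter_subset_right)

theorem based_compl {u : Finset ι} {b : Bc} (hb : Based x u b) : Based x u bᶜ := by
  obtain ⟨F, hF, rfl⟩ := hb
  have hFp : F ⊆ u.powerset := fun s hs => Finset.mem_powerset.mpr (hF s hs)
  refine ⟨u.powerset \ F, fun s hs => Finset.mem_powerset.mp (Finset.mem_sdiff.mp hs).1, ?_⟩
  apply compl_unique
  · rw [← le_bot_iff, Finset.sup_inf_distrib_right]
    apply Finset.sup_le
    intro s hsF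
    rw [Finset.sup_inf_distrib_left]
    apply Finset.sup_le
    intro t htG
    have hst : s ≠ t := by
      rintro rfl
      exact (Finset.mem_sdiff.mp htG).2 hsF
    rw [atom_inf_atom_eq_bot (hF s hsF) (Finset.mem_powerset.mp (Finset.mem_sdiff.mp htG).1) hst]
  · rw [← Finset.sup_union, Finset.union_sdiff_of_subset hFp, sup_atom_powerset]

theorem based_le_insert {u : Finset ι} {a : ι} (ha : a ∉ u) {b : Bc} (hb : Based x u b) :
    Based x (insert a u) b := by
  obtain ⟨F, hF, rfl⟩ := hb
  refine ⟨F ∪ F.image (insert a), ?_, ?_⟩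
  · intro s hs
    rcases Finset.mem_union.mp hs with hs | hs
    · exact (hF s hs).trans (Finset.subset_insert a u)
    · obtain ⟨t, ht, rfl⟩ := Finset.mem_image.mp hs
      exact Finset.insert_subset_insert a (hF t ht)
  · rw [Finset.sup_union, Finset.sup_image]
    have h1 : F.sup (atom x (insert a u)) = F.sup fun s => atom x u s ⊓ (x a)ᶜ :=
      Finset.sup_congr rfl fun s hs => (atom_inf_xc ha (hF s hs)).symm
    have h2 : F.sup (atom x (insert a u) ∘ insert a) = F.sup fun s => atom x u s ⊓ x a :=
      Finset.sup_congr rfl fun s hs => by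
        simp only [Function.comp_apply]; rw [atom_inf_x ha (hF s hs)]
    rw [h1, h2, ← Finset.sup_inf_distrib_right, ← Finset.sup_inf_distrib_right]
    rw [← inf_sup_left]
    simp

theorem based_mono {u v : Finset ι} (huv : u ⊆ v) {b : Bc} (hb : Based x u b) :
    Based x v b := by
  have key : ∀ w : Finset ι, Based x (u ∪ w) b := by
    intro w
    induction w using Finset.induction_on with
    | empty => simpa using hb
    | @insert a w ha ih =>
      by_cases hau : a ∈ u ∪ w
      · have : u ∪ insert a w = u ∪ w := by
          rw [Finset.union_insert, Finset.insert_eq_self.mpr hau]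
        rwa [this]
      · rw [Finset.union_insert]
        exact based_le_insert hau ih
  have := key v
  rwa [Finset.union_eq_right.mpr huv] at this

theorem boolGen_based {T : Set ι} {c : Bc} (h : BoolGen (x '' T) c) :
    ∃ u : Finset ι, ↑u ⊆ T ∧ Based x u c := by
  induction h with
  | @base a ha =>
    obtain ⟨i, hi, rfl⟩ := ha
    exact ⟨{i}, by simpa using hi, based_x i⟩
  | bot => exact ⟨∅, by simp, based_bot ∅⟩
  | top => exact ⟨∅, by simp, based_top ∅⟩
  | @sup a b _ _ iha ihb =>
    obtain ⟨u, hu, hua⟩ := iha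
    obtain ⟨v, hv, hvb⟩ := ihb
    exact ⟨u ∪ v, by simp [Finset.coe_union, Set.union_subset_iff, hu, hv],
      based_sup (based_mono Finset.subset_union_left hua)
        (based_mono Finset.subset_union_right hvb)⟩
  | @inf a b _ _ iha ihb =>
    obtain ⟨u, hu, hua⟩ := iha
    obtain ⟨v, hv, hvb⟩ := ihb
    exact ⟨u ∪ v, by simp [Finset.coe_union, Set.union_subset_iff, hu, hv],
      based_inf (based_mono Finset.subset_union_left hua)
        (based_mono Finset.subset_union_right hvb)⟩
  | @compl a _ iha =>
    obtain ⟨u, hu, hua⟩ := iha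
    exact ⟨u, hu, based_compl hua⟩

theorem exists_atom_le {u : Finset ι} {c : Bc} (hb : Based x u c) (hc : c ≠ ⊥) :
    ∃ s : Finset ι, s ⊆ u ∧ atom x u s ≤ c := by
  obtain ⟨F, hF, rfl⟩ := hb
  rcases F.eq_empty_or_nonempty with rfl | ⟨s, hs⟩
  · simp at hc
  · exact ⟨s, hF s hs, Finset.le_sup hs⟩


/-- Two atom descriptors conflict. -/
def Conf (p q : Finset ι × Finset ι) : Prop :=
  ∃ β, β ∈ p.1 ∧ β ∈ q.1 ∧ ¬(β ∈ p.2 ↔ β ∈ q.2)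

theorem finite_of_pairwise_conf :
    ∀ (n : ℕ) (P : Set (Finset ι × Finset ι)),
      (∀ p ∈ P, p.1.card ≤ n) → P.Pairwise Conf → P.Finite := by
  intro n
  induction n with
  | zero =>
    intro P hcard hconf
    apply Set.Subsingleton.finite
    intro p hp q hq
    by_contra hne
    obtain ⟨β, hβ1, -, -⟩ := hconf hp hq hne
    have := hcard p hp
    rw [Nat.le_zero, Finset.card_eq_zero] at this
    simp [this] at hβ1
  | succ n ih =>
    intro P hcard hconf
    rcases P.eq_empty_or_nonempty with rfl | ⟨p₀, hp₀⟩
    · exact Set.finite_empty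
    have hcover : P ⊆ insert p₀ (⋃ β ∈ p₀.1,
        {p ∈ P | β ∈ p.1 ∧ ¬(β ∈ p.2 ↔ β ∈ p₀.2)}) := by
      intro p hp
      by_cases hne : p = p₀
      · exact hne ▸ Set.mem_insert _ _
      · obtain ⟨β, hβ1, hβ2, hβ3⟩ := hconf hp hp₀ hne
        exact Set.mem_insert_iff.mpr (Or.inr (Set.mem_biUnion hβ2 ⟨hp, hβ1, hβ3⟩))
    refine Set.Finite.subset (Set.Finite.insert p₀ (Set.Finite.biUnion p₀.1.finite_toSet ?_))
      hcover
    intro β hβ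
    set Q := {p ∈ P | β ∈ p.1 ∧ ¬(β ∈ p.2 ↔ β ∈ p₀.2)} with hQ
    have hmem2 : ∀ p ∈ Q, (β ∈ p.2 ↔ β ∉ p₀.2) := by
      intro p hp
      have := hp.2.2
      tauto
    set r : Finset ι × Finset ι → Finset ι × Finset ι :=
      fun p => (p.1.erase β, p.2.erase β) with hr
    have hinj : Set.InjOn r Q := by
      intro p hp q hq hrpq
      have h1 : p.1 = q.1 := by
        have e1 : p.1.erase β = q.1.erase β := congrArg Prod.fst hrpq
        rw [← Finset.insert_erase hp.2.1, ← Finset.insert_erase hq.2.1, e1]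
      have hiff : β ∈ p.2 ↔ β ∈ q.2 := by
        rw [hmem2 p hp, hmem2 q hq]
      have h2 : p.2 = q.2 := by
        have e2 : p.2.erase β = q.2.erase β := congrArg Prod.snd hrpq
        ext γ
        by_cases hγ : γ = β
        · subst hγ; exact hiff
        · constructor
          · intro h
            have : γ ∈ q.2.erase β := e2 ▸ Finset.mem_erase.mpr ⟨hγ, h⟩
            exact (Finset.mem_erase.mp this).2
          · intro h
            have : γ ∈ p.2.erase β := e2 ▸ Finset.mem_erase.mpr ⟨hγ, h⟩
            exact (Finset.mem_erase.mp this).2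
      exact Prod.ext h1 h2
    have himg : (r '' Q).Pairwise Conf := by
      rintro _ ⟨p, hp, rfl⟩ _ ⟨q, hq, rfl⟩ hne
      have hpq : p ≠ q := fun h => hne (h ▸ rfl)
      obtain ⟨γ, hγ1, hγ2, hγ3⟩ := hconf hp.1 hq.1 hpq
      have hγβ : γ ≠ β := by
        rintro rfl
        have h1 := hmem2 p hp
        have h2 := hmem2 q hq
        tauto
      refine ⟨γ, Finset.mem_erase.mpr ⟨hγβ, hγ1⟩, Finset.mem_erase.mpr ⟨hγβ, hγ2⟩, ?_⟩
      simpa [hr, Finset.mem_erase, hγβ] using hγ3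
    have hcards : ∀ p ∈ r '' Q, p.1.card ≤ n := by
      rintro _ ⟨p, hp, rfl⟩
      simp only [hr]
      have : (p.1.erase β).card = p.1.card - 1 := Finset.card_erase_of_mem hp.2.1
      have hc := hcard p hp.1
      omega
    exact Set.Finite.of_finite_image (ih _ hcards himg) hinj

theorem countable_of_pairwise_conf {P : Set (Finset ι × Finset ι)}
    (hconf : P.Pairwise Conf) : P.Countable := by
  have : P = ⋃ n : ℕ, {p ∈ P | p.1.card = n} := by
    ext p
    simp only [Set.mem_iUnion, Set.mem_setOf_eq]
    exact ⟨fun hp => ⟨p.1.card, hp, rfl⟩, fun ⟨n, hp, _⟩ => hp⟩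
  rw [this]
  apply Set.countable_iUnion
  intro n
  apply Set.Finite.countable
  exact finite_of_pairwise_conf n _ (fun p hp => le_of_eq hp.2) (hconf.mono (Set.sep_subset _ _))

theorem conf_of_atom_inf_eq_bot
    (hindep : ∀ s t : Finset ι, Disjoint s t → s.inf x ⊓ t.inf (fun i => (x i)ᶜ) ≠ ⊥)
    {u s u' s' : Finset ι} (hs : s ⊆ u) (hs' : s' ⊆ u')
    (hbot : atom x u s ⊓ atom x u' s' = ⊥) : Conf (u, s) (u', s') := by
  by_contra hconf
  have hnc : ∀ β, β ∈ u → β ∈ u' → (β ∈ s ↔ β ∈ s') := by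
    intro β h1 h2
    by_contra h3
    exact hconf ⟨β, h1, h2, h3⟩
  have hsd : (u \ s) ∪ (u' \ s') = (u ∪ u') \ (s ∪ s') := by
    ext β
    simp only [Finset.mem_union, Finset.mem_sdiff, not_or]
    constructor
    · rintro (⟨h1, h2⟩ | ⟨h1, h2⟩)
      · refine ⟨Or.inl h1, h2, fun h => h2 ?_⟩
        exact (hnc β h1 (hs' h)).mpr h
      · refine ⟨Or.inr h1, fun h => h2 ((hnc β (hs h) h1).mp h), h2⟩
    · rintro ⟨h1 | h1, h2, h3⟩
      · exact Or.inl ⟨h1, h2⟩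
      · exact Or.inr ⟨h1, h3⟩
  have heq : atom x u s ⊓ atom x u' s' =
      (s ∪ s').inf x ⊓ ((u ∪ u') \ (s ∪ s')).inf (fun i => (x i)ᶜ) := by
    rw [Finset.inf_union, ← hsd, Finset.inf_union, atom, atom]
    ac_rfl
  rw [heq] at hbot
  exact hindep _ _ Finset.disjoint_sdiff hbot

theorem exists_decomp
    (hindep : ∀ s t : Finset ι, Disjoint s t → s.inf x ⊓ t.inf (fun i => (x i)ᶜ) ≠ ⊥)
    (hdense : ∀ b : Bc, b ≠ ⊥ → ∃ c : Bc, BoolGen (Set.range x) c ∧ c ≠ ⊥ ∧ c ≤ b)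
    (b : Bc) :
    ∃ P : Set (Finset ι × Finset ι), P.Countable ∧
      (∀ p ∈ P, p.2 ⊆ p.1 ∧ atom x p.1 p.2 ≤ b) ∧
      sSup ((fun p => atom x p.1 p.2) '' P) = b := by
  set S : Set (Set (Finset ι × Finset ι)) :=
    {P | (∀ p ∈ P, p.2 ⊆ p.1 ∧ atom x p.1 p.2 ≤ b) ∧
      P.Pairwise fun p q => atom x p.1 p.2 ⊓ atom x q.1 q.2 = ⊥} with hS
  have hchain : ∀ c ⊆ S, IsChain (· ⊆ ·) c → c.Nonempty →
      ∃ ub ∈ S, ∀ s ∈ c, s ⊆ ub := by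
    intro c hc hchain hne
    refine ⟨⋃₀ c, ⟨?_, ?_⟩, fun s hs => Set.subset_sUnion_of_mem hs⟩
    · rintro p ⟨P, hP, hp⟩
      exact (hc hP).1 p hp
    · rintro p ⟨P, hP, hp⟩ q ⟨Q, hQ, hq⟩ hne'
      rcases eq_or_ne P Q with rfl | hPQ
      · exact (hc hP).2 hp hq hne'
      · rcases hchain hP hQ hPQ with h | h
        · exact (hc hQ).2 (h hp) hq hne'
        · exact (hc hP).2 hp (h hq) hne'
  obtain ⟨M, -, hM⟩ := zorn_subset_nonempty S hchain ∅ ⟨by simp, by simp⟩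
  have hMS : M ∈ S := hM.prop
  set z := sSup ((fun p => atom x p.1 p.2) '' M) with hz
  have hzb : z ≤ b := by
    apply sSup_le
    rintro _ ⟨p, hp, rfl⟩
    exact (hMS.1 p hp).2
  have hzeq : z = b := by
    by_contra hne
    have hbz : b ⊓ zᶜ ≠ ⊥ := by
      intro h
      apply hne
      apply le_antisymm hzb
      rwa [← sdiff_eq, sdiff_eq_bot_iff] at h
    obtain ⟨c, hcgen, hcne, hcle⟩ := hdense _ hbz
    rw [← Set.image_univ] at hcgen
    obtain ⟨u, -, hub⟩ := boolGen_based hcgen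
    obtain ⟨s, hsu, hatomle⟩ := exists_atom_le hub hcne
    set p' : Finset ι × Finset ι := (u, s) with hp'
    have hp'b : atom x u s ≤ b := hatomle.trans (hcle.trans inf_le_left)
    have hp'z : atom x u s ≤ zᶜ := hatomle.trans (hcle.trans inf_le_right)
    have hp'M : p' ∉ M := by
      intro hmem
      have : atom x u s ≤ z := le_sSup ⟨p', hmem, rfl⟩
      have : atom x u s ≤ ⊥ := by
        calc atom x u s ≤ z ⊓ zᶜ := le_inf this hp'z
        _ = ⊥ := by simp
      exact atom_ne_bot hindep hsu (le_bot_iff.mp this)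
    have hM' : insert p' M ∈ S := by
      constructor
      · rintro p (rfl | hp)
        · exact ⟨hsu, hp'b⟩
        · exact hMS.1 p hp
      · rw [Set.pairwise_insert]
        refine ⟨hMS.2, fun q hq hne' => ?_⟩
        have hqz : atom x q.1 q.2 ≤ z := le_sSup ⟨q, hq, rfl⟩
        constructor
        · exact le_bot_iff.mp ((inf_le_inf hp'z hqz).trans (by simp [inf_comm]))
        · exact le_bot_iff.mp ((inf_le_inf hqz hp'z).trans (by simp))
    exact hp'M (hM.2 hM' (Set.subset_insert p' M) (Set.mem_insert p' M))
  refine ⟨M, ?_, hMS.1, hzeq⟩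
  apply countable_of_pairwise_conf
  intro p hp q hq hne
  have := hMS.2 hp hq hne
  exact conf_of_atom_inf_eq_bot hindep (hMS.1 p hp).1 (hMS.1 q hq).1 this

theorem boolGen_finsetInf {α : Type u} [BooleanAlgebra α] {S : Set α} {t : Finset ι}
    {y : ι → α} (h : ∀ i ∈ t, BoolGen S (y i)) : BoolGen S (t.inf y) := by
  induction t using Finset.induction_on with
  | empty => simpa using BoolGen.top
  | @insert a t ha ih =>
    rw [Finset.inf_insert]
    exact BoolGen.inf (h a (Finset.mem_insert_self a t))
      (ih fun i hi => h i (Finset.mem_insert_of_mem hi))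

theorem boolGen_atom {T : Set ι} {u s : Finset ι} (hu : ↑u ⊆ T) (hs : s ⊆ u) :
    BoolGen (x '' T) (atom x u s) := by
  apply BoolGen.inf
  · exact boolGen_finsetInf fun i hi => BoolGen.base ⟨i, hu (hs hi), rfl⟩
  · exact boolGen_finsetInf fun i hi =>
      BoolGen.compl (BoolGen.base ⟨i, hu (Finset.mem_sdiff.mp hi).1, rfl⟩)


/-- An ultrafilter on a Boolean algebra, as a set. -/
def IsUF (D : Set Bc) : Prop :=
  ⊥ ∉ D ∧ (∀ a b : Bc, a ∈ D → a ≤ b → b ∈ D) ∧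
    (∀ a b : Bc, a ∈ D → b ∈ D → a ⊓ b ∈ D) ∧ ∀ a : Bc, a ∈ D ∨ aᶜ ∈ D

namespace IsUF

variable {D : Set Bc} (hD : IsUF D)

include hD

theorem top_mem : (⊤ : Bc) ∈ D := by
  rcases hD.2.2.2 ⊤ with h | h
  · exact h
  · rw [compl_top] at h
    exact absurd h hD.1

theorem compl_mem_iff {a : Bc} : aᶜ ∈ D ↔ a ∉ D := by
  constructor
  · intro h ha
    have := hD.2.2.1 a aᶜ ha h
    rw [inf_compl_eq_bot] at this
    exact hD.1 this
  · intro h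
    rcases hD.2.2.2 a with h' | h'
    · exact absurd h' h
    · exact h'

theorem inf_mem_iff {a b : Bc} : a ⊓ b ∈ D ↔ a ∈ D ∧ b ∈ D := by
  constructor
  · intro h
    exact ⟨hD.2.1 _ _ h inf_le_left, hD.2.1 _ _ h inf_le_right⟩
  · intro ⟨ha, hb⟩
    exact hD.2.2.1 a b ha hb

theorem sup_mem_iff {a b : Bc} : a ⊔ b ∈ D ↔ a ∈ D ∨ b ∈ D := by
  constructor
  · intro h
    by_contra hc
    push_neg at hc
    have ha := hD.compl_mem_iff.mpr hc.1
    have hb := hD.compl_mem_iff.mpr hc.2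
    have := hD.2.2.1 _ _ (hD.2.2.1 _ _ ha hb) h
    rw [← compl_sup, compl_inf_eq_bot] at this
    exact hD.1 this
  · rintro (h | h)
    · exact hD.2.1 _ _ h le_sup_left
    · exact hD.2.1 _ _ h le_sup_right

theorem not_bot_mem' {a : Bc} (ha : a ∈ D) : a ≠ ⊥ := by
  rintro rfl
  exact hD.1 ha

end IsUF

/-- Every set with the finite intersection property extends to an ultrafilter. -/
theorem exists_isUF (G : Set Bc)
    (hG : ∀ F : Finset Bc, ↑F ⊆ G → F.inf id ≠ ⊥) :
    ∃ D : Set Bc, G ⊆ D ∧ IsUF D := by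
  classical
  set S : Set (Set Bc) := {H | G ⊆ H ∧ ∀ F : Finset Bc, ↑F ⊆ H → F.inf id ≠ ⊥} with hS
  have hchain : ∀ c ⊆ S, IsChain (· ⊆ ·) c → c.Nonempty →
      ∃ ub ∈ S, ∀ s ∈ c, s ⊆ ub := by
    intro c hc hchain ⟨c₀, hc₀⟩
    refine ⟨⋃₀ c, ⟨(hc hc₀).1.trans (Set.subset_sUnion_of_mem hc₀), ?_⟩,
      fun s hs => Set.subset_sUnion_of_mem hs⟩
    intro F hF
    have : ∃ H ∈ c, ↑F ⊆ H := by
      induction F using Finset.induction_on with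
      | empty => exact ⟨c₀, hc₀, by simp⟩
      | @insert a F ha ih =>
        have hsub : ↑F ⊆ ⋃₀ c := (Finset.coe_subset.mpr (Finset.subset_insert a F)).trans hF
        obtain ⟨H, hHc, hFH⟩ := ih hsub
        obtain ⟨H', hH'c, haH'⟩ := hF (Finset.mem_insert_self a F)
        rcases eq_or_ne H H' with rfl | hne
        · exact ⟨H, hHc, by rw [Finset.coe_insert]; exact Set.insert_subset haH' hFH⟩
        · rcases hchain hHc hH'c hne with h | h
          · exact ⟨H', hH'c, by rw [Finset.coe_insert]; exact Set.insert_subset haH' (hFH.trans h)⟩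
          · exact ⟨H, hHc, by rw [Finset.coe_insert]; exact Set.insert_subset (h haH') hFH⟩
    obtain ⟨H, hHc, hFH⟩ := this
    exact (hc hHc).2 F hFH
  obtain ⟨H, -, hH⟩ := zorn_subset_nonempty S hchain G ⟨subset_rfl, hG⟩
  have hHS : H ∈ S := hH.prop
  have hmax : ∀ b : Bc, b ∉ H → ∃ F : Finset Bc, ↑F ⊆ H ∧ F.inf id ⊓ b = ⊥ := by
    intro b hb
    by_contra hcon
    push_neg at hcon
    have : insert b H ∈ S := by
      refine ⟨hHS.1.trans (Set.subset_insert b H), ?_⟩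
      intro F hF
      by_cases hbF : b ∈ F
      · have hFb : ↑(F.erase b) ⊆ H := by
          intro a ha
          rcases hF (Finset.mem_coe.mpr (Finset.erase_subset b F (Finset.mem_coe.mp ha))) with h | h
          · exact absurd h (Finset.mem_erase.mp ha).1
          · exact h
        have : F.inf id = (F.erase b).inf id ⊓ b := by
          conv_lhs => rw [← Finset.insert_erase hbF]
          rw [Finset.inf_insert]
          simp [inf_comm]
        rw [this]
        exact hcon (F.erase b) hFb
      · have hFH : ↑F ⊆ H := by
          intro a ha
          rcases hF ha with h | h
          · exact absurd (h ▸ ha) (fun hh => hbF (Finset.mem_coe.mp (h ▸ ha)))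
          · exact h
        exact hHS.2 F hFH
    have := hH.2 this (Set.subset_insert b H) (Set.mem_insert b H)
    exact hb this
  refine ⟨H, hHS.1, ?_, ?_, ?_, ?_⟩
  · intro hbot
    exact hHS.2 {⊥} (by simpa using hbot) (by simp)
  · intro a b ha hab
    by_contra hb
    obtain ⟨F, hFH, hFb⟩ := hmax b hb
    have : (insert a F).inf id = ⊥ := by
      rw [Finset.inf_insert]
      have : F.inf id ⊓ a ≤ F.inf id ⊓ b := inf_le_inf_left _ hab
      rw [hFb] at this
      rw [id]
      exact le_bot_iff.mp (le_trans (le_of_eq (inf_comm _ _)) this)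
    exact hHS.2 (insert a F) (by rw [Finset.coe_insert]; exact Set.insert_subset ha hFH) this
  · intro a b ha hb
    by_contra hab
    obtain ⟨F, hFH, hFb⟩ := hmax _ hab
    have : (insert a (insert b F)).inf id = ⊥ := by
      rw [Finset.inf_insert, Finset.inf_insert]
      simp only [id]
      calc a ⊓ (b ⊓ F.inf id) = F.inf id ⊓ (a ⊓ b) := by ac_rfl
      _ = ⊥ := hFb
    refine hHS.2 _ ?_ this
    rw [Finset.coe_insert, Finset.coe_insert]
    exact Set.insert_subset ha (Set.insert_subset hb hFH)
  · intro a
    by_contra hc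
    push_neg at hc
    obtain ⟨F₁, hF₁H, hF₁⟩ := hmax a hc.1
    obtain ⟨F₂, hF₂H, hF₂⟩ := hmax aᶜ hc.2
    have h1 : F₁.inf id ≤ aᶜ :=
      le_compl_iff_disjoint_right.mpr (disjoint_iff.mpr hF₁)
    have h2 : F₂.inf id ≤ a := by
      have := le_compl_iff_disjoint_right.mpr (disjoint_iff.mpr hF₂)
      rwa [compl_compl] at this
    have : (F₁ ∪ F₂).inf id = ⊥ := by
      rw [Finset.inf_union]
      exact le_bot_iff.mp ((inf_le_inf h1 h2).trans (by simp [inf_comm]))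
    exact hHS.2 _ (by rw [Finset.coe_union]; exact Set.union_subset hF₁H hF₂H) this


/-- `b` belongs to the complete subalgebra generated by the generators other than `α`. -/
def InM (x : ι → Bc) (α : ι) (b : Bc) : Prop :=
  ∃ A A' : Set Bc, A.Countable ∧ A'.Countable ∧
    (∀ a ∈ A, BoolGen (x '' {β | β ≠ α}) a) ∧ (∀ a ∈ A', BoolGen (x '' {β | β ≠ α}) a) ∧
    sSup A = b ∧ sSup A' = bᶜ

theorem inM_compl {α : ι} {b : Bc} (h : InM x α b) : InM x α bᶜ := by
  obtain ⟨A, A', h1, h2, h3, h4, h5, h6⟩ := h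
  exact ⟨A', A, h2, h1, h4, h3, h6, by rw [compl_compl]; exact h5⟩

theorem inM_top (α : ι) : InM x α (⊤ : Bc) :=
  ⟨{⊤}, {⊥}, Set.countable_singleton _, Set.countable_singleton _,
    by rintro a rfl; exact BoolGen.top, by rintro a rfl; exact BoolGen.bot,
    by simp, by simp⟩

theorem inM_inf {α : ι} {b c : Bc} (hb : InM x α b) (hc : InM x α c) :
    InM x α (b ⊓ c) := by
  obtain ⟨A, A', h1, h2, h3, h4, h5, h6⟩ := hb
  obtain ⟨B, B', g1, g2, g3, g4, g5, g6⟩ := hc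
  refine ⟨Set.image2 (· ⊓ ·) A B, A' ∪ B', h1.image2 g1 _, h2.union g2, ?_, ?_, ?_, ?_⟩
  · rintro a ⟨a₁, ha₁, a₂, ha₂, rfl⟩
    exact BoolGen.inf (h3 a₁ ha₁) (g3 a₂ ha₂)
  · rintro a (ha | ha)
    · exact h4 a ha
    · exact g4 a ha
  · rw [sSup_image2]
    rw [← h5, ← g5, sSup_inf_sSup]
    rw [iSup_prod]
    simp [Set.mem_prod, iSup_and]
    exact iSup_congr fun i => iSup_comm
  · rw [sSup_union, h6, g6, compl_inf]

theorem inM_x {α β : ι} (h : β ≠ α) : InM x α (x β) :=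
  ⟨{x β}, {(x β)ᶜ}, Set.countable_singleton _, Set.countable_singleton _,
    by rintro a rfl; exact BoolGen.base ⟨β, h, rfl⟩,
    by rintro a rfl; exact BoolGen.compl (BoolGen.base ⟨β, h, rfl⟩),
    by simp, by simp⟩

theorem inM_inf_x_ne_bot
    (hindep : ∀ s t : Finset ι, Disjoint s t → s.inf x ⊓ t.inf (fun i => (x i)ᶜ) ≠ ⊥)
    {α : ι} {b : Bc} (h : InM x α b) (hb : b ≠ ⊥) : b ⊓ x α ≠ ⊥ := by
  obtain ⟨A, -, -, -, h3, -, h5, -⟩ := h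
  have : ∃ a ∈ A, a ≠ ⊥ := by
    by_contra hcon
    push_neg at hcon
    apply hb
    rw [← h5]
    exact le_bot_iff.mp (sSup_le fun a ha => le_of_eq (hcon a ha))
  obtain ⟨a, haA, hane⟩ := this
  obtain ⟨u, hu, hub⟩ := boolGen_based (h3 a haA)
  obtain ⟨s, hsu, hatom⟩ := exists_atom_le hub hane
  have hαu : α ∉ u := fun hmem => (hu hmem) rfl
  have key : atom x u s ⊓ x α ≠ ⊥ := by
    rw [atom_inf_x hαu hsu]
    exact atom_ne_bot hindep (Finset.insert_subset_insert α hsu)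
  intro hcon
  apply key
  apply le_bot_iff.mp
  rw [← hcon]
  apply inf_le_inf_right
  exact hatom.trans (le_sSup_of_le haA (le_refl a) |>.trans (le_of_eq h5))

theorem exists_countable_support
    (hindep : ∀ s t : Finset ι, Disjoint s t → s.inf x ⊓ t.inf (fun i => (x i)ᶜ) ≠ ⊥)
    (hdense : ∀ b : Bc, b ≠ ⊥ → ∃ c : Bc, BoolGen (Set.range x) c ∧ c ≠ ⊥ ∧ c ≤ b)
    (b : Bc) :
    ∃ Sset : Set ι, Sset.Countable ∧ ∀ α ∉ Sset, InM x α b := by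
  obtain ⟨P, hPc, hPp, hPs⟩ := exists_decomp hindep hdense b
  obtain ⟨P', hP'c, hP'p, hP's⟩ := exists_decomp hindep hdense bᶜ
  refine ⟨(⋃ p ∈ P, ↑p.1) ∪ ⋃ p ∈ P', ↑p.1,
    (hPc.biUnion fun p _ => p.1.finite_toSet.countable).union
      (hP'c.biUnion fun p _ => p.1.finite_toSet.countable), ?_⟩
  intro α hα
  refine ⟨(fun p => atom x p.1 p.2) '' P, (fun p => atom x p.1 p.2) '' P',
    hPc.image _, hP'c.image _, ?_, ?_, hPs, hP's⟩
  · rintro _ ⟨p, hp, rfl⟩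
    refine boolGen_atom ?_ (hPp p hp).1
    intro β hβ
    intro hcon
    apply hα
    subst hcon
    exact Set.mem_union_left _ (Set.mem_biUnion hp hβ)
  · rintro _ ⟨p, hp, rfl⟩
    refine boolGen_atom ?_ (hP'p p hp).1
    intro β hβ
    intro hcon
    apply hα
    subst hcon
    exact Set.mem_union_right _ (Set.mem_biUnion hp hβ)


theorem main
    (hindep : ∀ s t : Finset ι, Disjoint s t → s.inf x ⊓ t.inf (fun i => (x i)ᶜ) ≠ ⊥)
    (hdense : ∀ b : Bc, b ≠ ⊥ → ∃ c : Bc, BoolGen (Set.range x) c ∧ c ≠ ⊥ ∧ c ≤ b) :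
    ∃ f : Bc → Set ι, IsBoolHom f ∧ (∀ i : ι, f (x i) = {i}) ∧
      ∀ b : Bc, (f b).Countable ∨ ((f b)ᶜ : Set ι).Countable := by
  classical
  -- the ultrafilter D containing all complements of generators
  have hGfip : ∀ F : Finset Bc, ↑F ⊆ Set.range (fun i => (x i)ᶜ) → F.inf id ≠ ⊥ := by
    intro F hF
    rw [← Set.image_univ] at hF
    obtain ⟨t, -, himg⟩ := Finset.subset_set_image_iff.mp hF
    rw [← himg, Finset.inf_image]
    have := hindep ∅ t (Finset.disjoint_empty_left t)
    simpa using this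
  obtain ⟨D, hGD, hD⟩ := exists_isUF _ hGfip
  have hxcD : ∀ i, (x i)ᶜ ∈ D := fun i => hGD ⟨i, rfl⟩
  have hxD : ∀ i, x i ∉ D := fun i => hD.compl_mem_iff.mp (hxcD i)
  -- the ultrafilters D_α
  have hDalpha : ∀ α : ι, ∃ Dα : Set Bc, IsUF Dα ∧ x α ∈ Dα ∧
      ∀ b : Bc, InM x α b → (b ∈ D ↔ b ∈ Dα) := by
    intro α
    have fip : ∀ F : Finset Bc, (F : Set Bc) ⊆ (insert (x α) {d : Bc | d ∈ D ∧ InM x α d} : Set Bc) →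
        F.inf id ≠ ⊥ := by
      intro F hF
      set F' := F.erase (x α) with hF'def
      have hF' : ↑F' ⊆ {d | d ∈ D ∧ InM x α d} := by
        intro a ha
        have haF : a ∈ F := Finset.erase_subset _ _ (Finset.mem_coe.mp ha)
        rcases hF haF with h | h
        · exact absurd h (Finset.mem_erase.mp ha).1
        · exact h
      have key : ∀ t : Finset Bc, ↑t ⊆ {d : Bc | d ∈ D ∧ InM x α d} →
          t.inf id ∈ D ∧ InM x α (t.inf id) := by
        intro t
        induction t using Finset.induction_on with
        | empty => exact fun _ => ⟨by simpa using hD.top_mem, by simpa using inM_top α⟩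
        | @insert a t ha ih =>
          intro hsub
          have haDM : a ∈ D ∧ InM x α a :=
            hsub (Finset.mem_coe.mpr (Finset.mem_insert_self a t))
          have ht := ih fun b hb => hsub (Finset.mem_coe.mpr
            (Finset.mem_insert_of_mem (Finset.mem_coe.mp hb)))
          rw [Finset.inf_insert]
          exact ⟨hD.2.2.1 _ _ haDM.1 ht.1, inM_inf haDM.2 ht.2⟩
      have hDM : F'.inf id ∈ D ∧ InM x α (F'.inf id) := key F' hF'
      have hne : F'.inf id ≠ ⊥ := hD.not_bot_mem' hDM.1
      by_cases hmem : x α ∈ F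
      · have : F.inf id = x α ⊓ F'.inf id := by
          conv_lhs => rw [← Finset.insert_erase hmem]
          rw [Finset.inf_insert]
          rfl
        rw [this, inf_comm]
        exact inM_inf_x_ne_bot hindep hDM.2 hne
      · rw [hF'def, Finset.erase_eq_of_notMem hmem] at hne
        exact hne
    obtain ⟨Dα, hGDα, hDαUF⟩ := exists_isUF _ fip
    refine ⟨Dα, hDαUF, hGDα (Set.mem_insert _ _), ?_⟩
    intro b hM
    constructor
    · intro hb
      exact hGDα (Set.mem_insert_iff.mpr (Or.inr ⟨hb, hM⟩))
    · intro hb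
      by_contra hbD
      have h1 : bᶜ ∈ D := hD.compl_mem_iff.mpr hbD
      have h2 : bᶜ ∈ Dα := hGDα (Set.mem_insert_iff.mpr (Or.inr ⟨h1, inM_compl hM⟩))
      exact hDαUF.compl_mem_iff.mp h2 hb
  choose Dα hUF hxmem hagree using hDalpha
  refine ⟨fun b => {α | b ∈ Dα α}, ⟨?_, ?_, ?_, ?_, ?_⟩, ?_, ?_⟩
  · ext α
    simp only [Set.mem_setOf_eq]
    exact ⟨fun h => (hUF α).1 h, fun h => absurd h (Set.notMem_empty α)⟩
  · ext α
    simp only [Set.mem_setOf_eq]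
    exact ⟨fun _ => trivial, fun _ => (hUF α).top_mem⟩
  · intro a b
    ext α
    simp only [Set.mem_setOf_eq, Set.mem_union]
    exact (hUF α).sup_mem_iff
  · intro a b
    ext α
    simp only [Set.mem_setOf_eq, Set.mem_inter_iff]
    exact (hUF α).inf_mem_iff
  · intro a
    ext α
    simp only [Set.mem_setOf_eq, Set.mem_compl_iff]
    exact (hUF α).compl_mem_iff
  · intro i
    ext j
    simp only [Set.mem_setOf_eq, Set.mem_singleton_iff]
    constructor
    · intro h
      by_contra hne
      have hiM : InM x j (x i) := inM_x (fun hc => hne (hc ▸ rfl))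
      exact hxD i ((hagree j (x i) hiM).mpr h)
    · rintro rfl
      exact hxmem j
  · intro b
    obtain ⟨Sset, hSc, hSM⟩ := exists_countable_support hindep hdense b
    by_cases hbD : b ∈ D
    · right
      apply hSc.mono
      intro α hα
      simp only [Set.mem_compl_iff, Set.mem_setOf_eq] at hα
      by_contra hαS
      exact hα ((hagree α b (hSM α hαS)).mp hbD)
    · left
      apply hSc.mono
      intro α hα
      simp only [Set.mem_setOf_eq] at hα
      by_contra hαS
      exact hbD ((hagree α b (hSM α hαS)).mpr hα)

end Stmt8

/-- Let `B_σ` be the free Boolean algebra on `σ` generators `x_α` (expressed by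
independence of the family `x`) and `B^c_σ` its completion (a complete Boolean algebra in
which the subalgebra generated by the `x_α` is dense).  Then there is a homomorphism
`f : B^c_σ → P(σ)` with `f(x_α) = {α}` such that every `f(b)` is countable or
co-countable. -/
theorem stmt_8 (σ : Cardinal.{u}) (hσ : ℵ₀ ≤ σ) (ι : Type u) (hι : #ι = σ)
    (Bc : Type u) [CompleteBooleanAlgebra Bc] (x : ι → Bc)
    (hindep : ∀ s t : Finset ι, Disjoint s t →
      s.inf x ⊓ t.inf (fun i => (x i)ᶜ) ≠ ⊥)
    (hdense : ∀ b : Bc, b ≠ ⊥ → ∃ c : Bc, BoolGen (Set.range x) c ∧ c ≠ ⊥ ∧ c ≤ b) :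
    ∃ f : Bc → Set ι, IsBoolHom f ∧ (∀ i : ι, f (x i) = {i}) ∧
      ∀ b : Bc, (f b).Countable ∨ ((f b)ᶜ : Set ι).Countable := by
  classical
  exact Stmt8.main hindep hdense
end

section
/- Let λ be an infinite cardinal and ⟨a_β : β < λ⟩ a semi-independent sequence in a Boolean algebra B. Then either {a_β : β < λ} is an independent subset of B of cardinality λ, or B contains a strictly decreasing sequence of length λ. Consequently si⁺(B) ≤ ind⁺(B) + Depth⁺(B). -/
universe u

open Cardinal

/-- A set `S` is independent: all finite nontrivial Boolean combinations are nonzero. -/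
def IndepSet {B : Type u} [BooleanAlgebra B] (S : Set B) : Prop :=
  ∀ s t : Finset B, ↑s ⊆ S → ↑t ⊆ S → Disjoint s t →
    s.inf id ⊓ t.inf (fun b => bᶜ) ≠ ⊥

/-- `⟨a_β : β < bstar⟩` is an independent sequence. -/
def IndepSeq {B : Type u} [BooleanAlgebra B] (bstar : Ordinal.{u}) (a : Ordinal.{u} → B) :
    Prop :=
  ∀ s t : Finset Ordinal.{u}, (∀ β ∈ s, β < bstar) → (∀ β ∈ t, β < bstar) →
    Disjoint s t → s.inf a ⊓ t.inf (fun β => (a β)ᶜ) ≠ ⊥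

/-- `⟨a_β : β < bstar⟩` is semi-independent with witnessing ideal `I`. -/
def SemiIndepWith {B : Type u} [BooleanAlgebra B] (bstar : Ordinal.{u})
    (a : Ordinal.{u} → B) (I : Order.Ideal B) : Prop :=
  (∀ β γ, β < bstar → γ < bstar → β ≠ γ → a β ≠ a γ) ∧
  ∀ α γ, α < γ → γ < bstar → ∀ b : B, BoolGen {y | ∃ β, β < α ∧ a β = y} b →
    (b ∈ I → b ⊓ a γ = b ⊓ a α) ∧
    (b ∉ I → (b ⊓ a α ⊓ a γ ≠ ⊥ ∧ b ⊓ a α ⊓ (a γ)ᶜ ≠ ⊥ ∧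
      b ⊓ (a α)ᶜ ⊓ a γ ≠ ⊥ ∧ b ⊓ (a α)ᶜ ⊓ (a γ)ᶜ ≠ ⊥)) ∧
    (b ∉ I → b ⊓ a α ∈ I → b ⊓ a γ ∈ I) ∧
    (b ∉ I → b \ a α ∈ I → b \ a γ ∈ I)

/-- `ind⁺(B)`. -/
noncomputable def indPlus (B : Type u) [BooleanAlgebra B] : Cardinal.{u} :=
  sInf {c : Cardinal.{u} | ¬ ∃ a : Ordinal.{u} → B, IndepSeq c.ord a}

/-- `si⁺(B)`. -/
noncomputable def siPlus (B : Type u) [BooleanAlgebra B] : Cardinal.{u} :=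
  sInf {c : Cardinal.{u} |
    ¬ ∃ (a : Ordinal.{u} → B) (I : Order.Ideal B), SemiIndepWith c.ord a I}

/-- `Depth⁺(B)`: the least cardinal `λ` such that `B` has no strictly increasing chain of
length `λ`. -/
noncomputable def depthPlus (B : Type u) [BooleanAlgebra B] : Cardinal.{u} :=
  sInf {c : Cardinal.{u} |
    ¬ ∃ f : Ordinal.{u} → B, ∀ i j : Ordinal.{u}, i < j → j < c.ord → f i < f j}

set_option linter.unusedSectionVars false

section Main
variable {B : Type u} [BooleanAlgebra B]

lemma boolGen_mono {s t : Set B} (h : s ⊆ t) {b : B} (hb : BoolGen s b) : BoolGen t b := by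
  induction hb with
  | base h' => exact BoolGen.base (h h')
  | bot => exact BoolGen.bot
  | top => exact BoolGen.top
  | sup _ _ ih1 ih2 => exact BoolGen.sup ih1 ih2
  | inf _ _ ih1 ih2 => exact BoolGen.inf ih1 ih2
  | compl _ ih => exact BoolGen.compl ih

def genSet (a : Ordinal.{u} → B) (α : Ordinal.{u}) : Set B := {y | ∃ β, β < α ∧ a β = y}

lemma genSet_mono (a : Ordinal.{u} → B) {α α' : Ordinal.{u}} (h : α ≤ α') :
    genSet a α ⊆ genSet a α' := by
  rintro y ⟨β, hβ, he⟩; exact ⟨β, hβ.trans_le h, he⟩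

lemma boolGen_finsetInf (a : Ordinal.{u} → B) {α : Ordinal.{u}} {s : Finset Ordinal.{u}}
    (hs : ∀ β ∈ s, β < α) : BoolGen (genSet a α) (s.inf a) := by
  classical
  induction s using Finset.induction_on with
  | empty => simpa using BoolGen.top
  | @insert β s hβ ih =>
      rw [Finset.inf_insert]
      exact BoolGen.inf (BoolGen.base ⟨β, hs β (Finset.mem_insert_self β s), rfl⟩)
        (ih fun γ hγ => hs γ (Finset.mem_insert_of_mem hγ))

lemma boolGen_finsetInfCompl (a : Ordinal.{u} → B) {α : Ordinal.{u}} {s : Finset Ordinal.{u}}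
    (hs : ∀ β ∈ s, β < α) : BoolGen (genSet a α) (s.inf fun β => (a β)ᶜ) := by
  classical
  induction s using Finset.induction_on with
  | empty => simpa using BoolGen.top
  | @insert β s hβ ih =>
      rw [Finset.inf_insert]
      exact BoolGen.inf (BoolGen.compl (BoolGen.base ⟨β, hs β (Finset.mem_insert_self β s), rfl⟩))
        (ih fun γ hγ => hs γ (Finset.mem_insert_of_mem hγ))

def combo (a : Ordinal.{u} → B) (s t : Finset Ordinal.{u}) : B :=
  s.inf a ⊓ t.inf fun β => (a β)ᶜ

lemma boolGen_combo (a : Ordinal.{u} → B) {α : Ordinal.{u}} {s t : Finset Ordinal.{u}}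
    (hs : ∀ β ∈ s, β < α) (ht : ∀ β ∈ t, β < α) : BoolGen (genSet a α) (combo a s t) :=
  BoolGen.inf (boolGen_finsetInf a hs) (boolGen_finsetInfCompl a ht)

lemma pop_max (a : Ordinal.{u} → B) {s t : Finset Ordinal.{u}} (hdisj : Disjoint s t)
    (hu : (s ∪ t).Nonempty) :
    ∃ (s' t' : Finset Ordinal.{u}) (lit : B),
      Disjoint s' t' ∧ s' ∪ t' = (s ∪ t).erase ((s ∪ t).max' hu) ∧
      s' ⊆ s ∧ t' ⊆ t ∧
      (lit = a ((s ∪ t).max' hu) ∨ lit = (a ((s ∪ t).max' hu))ᶜ) ∧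
      combo a s t = lit ⊓ combo a s' t' := by
  classical
  set γ := (s ∪ t).max' hu with hγ
  rcases Finset.mem_union.1 (Finset.max'_mem _ hu) with hγs | hγt
  · have hγnt : γ ∉ t := Finset.disjoint_left.1 hdisj hγs
    refine ⟨s.erase γ, t, a γ, hdisj.mono_left (Finset.erase_subset _ _), ?_,
      Finset.erase_subset _ _, Finset.Subset.refl t, Or.inl rfl, ?_⟩
    · rw [Finset.erase_union_distrib, Finset.erase_eq_of_notMem hγnt]
    · unfold combo
      conv_lhs => rw [← Finset.insert_erase hγs]
      rw [Finset.inf_insert, inf_assoc]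
  · have hγns : γ ∉ s := Finset.disjoint_right.1 hdisj hγt
    refine ⟨s, t.erase γ, (a γ)ᶜ, hdisj.mono_right (Finset.erase_subset _ _), ?_,
      Finset.Subset.refl s, Finset.erase_subset _ _, Or.inr rfl, ?_⟩
    · rw [Finset.erase_union_distrib, Finset.erase_eq_of_notMem hγns]
    · unfold combo
      conv_lhs => rw [← Finset.insert_erase hγt]
      rw [Finset.inf_insert, inf_left_comm]




def Tgt (a : Ordinal.{u} → B) (I : Order.Ideal B) (L : Ordinal.{u}) : Prop :=
  ∃ x δ, δ < L ∧ x ∉ I ∧ BoolGen (genSet a δ) x ∧ (x ⊓ a δ ∈ I ∨ x \ a δ ∈ I)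

variable {lam : Cardinal.{u}} {a : Ordinal.{u} → B} {I : Order.Ideal B}

lemma natLt (hlam : ℵ₀ ≤ lam) (n : ℕ) : (n : Ordinal.{u}) < lam.ord :=
  (Ordinal.nat_lt_omega0 n).trans_le (Cardinal.omega0_le_ord.2 hlam)

lemma succLt (hlam : ℵ₀ ≤ lam) {γ : Ordinal.{u}} (h : γ < lam.ord) : γ + 1 < lam.ord := by
  rw [Ordinal.add_one_eq_succ]
  exact (Cardinal.isSuccLimit_ord hlam).succ_lt h

lemma ltSelfAddOne (γ : Ordinal.{u}) : γ < γ + 1 := by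
  rw [Ordinal.add_one_eq_succ]; exact Order.lt_succ γ

lemma addOneLe {γ γ' : Ordinal.{u}} (h : γ < γ') : γ + 1 ≤ γ' := by
  rw [Ordinal.add_one_eq_succ]; exact Order.succ_le_of_lt h

lemma top_not_mem (hlam : ℵ₀ ≤ lam) (hsi : SemiIndepWith lam.ord a I) : (⊤ : B) ∉ I := by
  intro htop
  have h0 : (0 : Ordinal.{u}) < lam.ord := by simpa using natLt hlam 0
  have h1 : (1 : Ordinal.{u}) < lam.ord := by simpa using natLt hlam 1
  have h := (hsi.2 0 1 zero_lt_one h1 ⊤ BoolGen.top).1 htop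
  simp only [top_inf_eq] at h
  exact hsi.1 1 0 h1 h0 one_ne_zero h

lemma target_of_inI (hlam : ℵ₀ ≤ lam) (hsi : SemiIndepWith lam.ord a I) :
    ∀ (n : ℕ) (s t : Finset Ordinal.{u}), (s ∪ t).card ≤ n → Disjoint s t →
      (∀ β ∈ s, β < lam.ord) → (∀ β ∈ t, β < lam.ord) →
      combo a s t ∈ I → combo a s t ≠ ⊥ → Tgt a I lam.ord := by
  intro n
  induction n with
  | zero =>
      intro s t hcard _ _ _ hmem _
      have hu : s ∪ t = ∅ := Finset.card_eq_zero.1 (Nat.le_zero.1 hcard)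
      obtain ⟨hs, ht⟩ := Finset.union_eq_empty.1 hu
      rw [hs, ht] at hmem
      simp only [combo, Finset.inf_empty, top_inf_eq] at hmem
      exact absurd hmem (top_not_mem hlam hsi)
  | succ n ih =>
      intro s t hcard hdisj hsb htb hmem hne
      rcases Finset.eq_empty_or_nonempty (s ∪ t) with hu | hu
      · obtain ⟨hs, ht⟩ := Finset.union_eq_empty.1 hu
        rw [hs, ht] at hmem
        simp only [combo, Finset.inf_empty, top_inf_eq] at hmem
        exact absurd hmem (top_not_mem hlam hsi)
      · obtain ⟨s', t', lit, hdisj', hunion, hs'sub, ht'sub, hlit, hsplit⟩ := pop_max a hdisj hu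
        set γ := (s ∪ t).max' hu with hγdef
        have hγmem : γ ∈ s ∪ t := Finset.max'_mem _ hu
        have hγL : γ < lam.ord := by
          rcases Finset.mem_union.1 hγmem with h | h
          exacts [hsb γ h, htb γ h]
        have hbound : ∀ β ∈ s' ∪ t', β < γ := by
          intro β hβ
          rw [hunion] at hβ
          exact lt_of_le_of_ne (Finset.le_max' _ _ (Finset.mem_of_mem_erase hβ))
            (Finset.ne_of_mem_erase hβ)
        have hb'ne : combo a s' t' ≠ ⊥ := by
          intro h; exact hne (by rw [hsplit, h, inf_bot_eq])
        by_cases hb'I : combo a s' t' ∈ I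
        · refine ih s' t' ?_ hdisj' (fun β hβ => hsb β (hs'sub hβ))
            (fun β hβ => htb β (ht'sub hβ)) hb'I hb'ne
          rw [hunion, Finset.card_erase_of_mem hγmem]
          omega
        · refine ⟨combo a s' t', γ, hγL, hb'I,
            boolGen_combo a (fun β hβ => hbound β (Finset.mem_union_left _ hβ))
              (fun β hβ => hbound β (Finset.mem_union_right _ hβ)), ?_⟩
          rcases hlit with rfl | rfl
          · exact Or.inl (by rw [inf_comm, ← hsplit]; exact hmem)
          · exact Or.inr (by rw [sdiff_eq, inf_comm, ← hsplit]; exact hmem)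

lemma target_of_bot (hlam : ℵ₀ ≤ lam) (hsi : SemiIndepWith lam.ord a I) :
    ∀ (n : ℕ) (s t : Finset Ordinal.{u}), (s ∪ t).card ≤ n → Disjoint s t →
      (∀ β ∈ s, β < lam.ord) → (∀ β ∈ t, β < lam.ord) →
      combo a s t = ⊥ → Tgt a I lam.ord := by
  intro n
  induction n with
  | zero =>
      intro s t hcard _ _ _ hbot
      have hu : s ∪ t = ∅ := Finset.card_eq_zero.1 (Nat.le_zero.1 hcard)
      obtain ⟨hs, ht⟩ := Finset.union_eq_empty.1 hu
      rw [hs, ht] at hbot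
      simp only [combo, Finset.inf_empty, top_inf_eq] at hbot
      exfalso
      have h0 : (0 : Ordinal.{u}) < lam.ord := by simpa using natLt hlam 0
      have h1 : (1 : Ordinal.{u}) < lam.ord := by simpa using natLt hlam 1
      refine hsi.1 0 1 h0 h1 zero_ne_one ?_
      have hz : ∀ y : B, y = ⊥ := fun y => le_bot_iff.1 (hbot ▸ le_top)
      rw [hz (a 0), hz (a 1)]
  | succ n ih =>
      intro s t hcard hdisj hsb htb hbot
      rcases Finset.eq_empty_or_nonempty (s ∪ t) with hu | hu
      · obtain ⟨hs, ht⟩ := Finset.union_eq_empty.1 hu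
        rw [hs, ht] at hbot
        simp only [combo, Finset.inf_empty, top_inf_eq] at hbot
        exfalso
        have h0 : (0 : Ordinal.{u}) < lam.ord := by simpa using natLt hlam 0
        have h1 : (1 : Ordinal.{u}) < lam.ord := by simpa using natLt hlam 1
        refine hsi.1 0 1 h0 h1 zero_ne_one ?_
        have hz : ∀ y : B, y = ⊥ := fun y => le_bot_iff.1 (hbot ▸ le_top)
        rw [hz (a 0), hz (a 1)]
      · obtain ⟨s', t', lit, hdisj', hunion, hs'sub, ht'sub, hlit, hsplit⟩ := pop_max a hdisj hu
        set γ := (s ∪ t).max' hu with hγdef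
        have hγmem : γ ∈ s ∪ t := Finset.max'_mem _ hu
        have hγL : γ < lam.ord := by
          rcases Finset.mem_union.1 hγmem with h | h
          exacts [hsb γ h, htb γ h]
        have hbound : ∀ β ∈ s' ∪ t', β < γ := by
          intro β hβ
          rw [hunion] at hβ
          exact lt_of_le_of_ne (Finset.le_max' _ _ (Finset.mem_of_mem_erase hβ))
            (Finset.ne_of_mem_erase hβ)
        have hs'L : ∀ β ∈ s', β < lam.ord := fun β hβ => hsb β (hs'sub hβ)
        have ht'L : ∀ β ∈ t', β < lam.ord := fun β hβ => htb β (ht'sub hβ)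
        by_cases hb0 : combo a s' t' = ⊥
        · refine ih s' t' ?_ hdisj' hs'L ht'L hb0
          rw [hunion, Finset.card_erase_of_mem hγmem]
          omega
        by_cases hb'I : combo a s' t' ∈ I
        · exact target_of_inI hlam hsi (s' ∪ t').card s' t' le_rfl hdisj' hs'L ht'L hb'I hb0
        rcases Finset.eq_empty_or_nonempty (s' ∪ t') with hu' | hu'
        · exfalso
          obtain ⟨hs1, ht1⟩ := Finset.union_eq_empty.1 hu'
          have hctop : combo a s' t' = ⊤ := by
            rw [hs1, ht1]; simp [combo]
          rw [hctop, inf_top_eq] at hsplit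
          have hlitbot : lit = ⊥ := hsplit ▸ hbot
          have h4 := (hsi.2 γ (γ + 1) (ltSelfAddOne γ) (succLt hlam hγL) ⊤
            BoolGen.top).2.1 (top_not_mem hlam hsi)
          rcases hlit with rfl | rfl
          · exact h4.1 (by rw [hlitbot]; simp)
          · exact h4.2.2.2 (by rw [hlitbot]; simp)
        · obtain ⟨s'', t'', lit', hdisj'', hunion', hs''sub, ht''sub, hlit', hsplit'⟩ :=
            pop_max a hdisj' hu'
          set δ := (s' ∪ t').max' hu' with hδdef
          have hδmem : δ ∈ s' ∪ t' := Finset.max'_mem _ hu'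
          have hδγ : δ < γ := hbound δ hδmem
          have hbound' : ∀ β ∈ s'' ∪ t'', β < δ := by
            intro β hβ
            rw [hunion'] at hβ
            exact lt_of_le_of_ne (Finset.le_max' _ _ (Finset.mem_of_mem_erase hβ))
              (Finset.ne_of_mem_erase hβ)
          have hb''ne : combo a s'' t'' ≠ ⊥ := by
            intro h; exact hb0 (by rw [hsplit', h, inf_bot_eq])
          by_cases hb''I : combo a s'' t'' ∈ I
          · exact target_of_inI hlam hsi (s'' ∪ t'').card s'' t'' le_rfl hdisj''
              (fun β hβ => hs'L β (hs''sub hβ)) (fun β hβ => ht'L β (ht''sub hβ)) hb''I hb''ne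
          · exfalso
            have hgen : BoolGen (genSet a δ) (combo a s'' t'') :=
              boolGen_combo a (fun β hβ => hbound' β (Finset.mem_union_left _ hβ))
                (fun β hβ => hbound' β (Finset.mem_union_right _ hβ))
            have h4 := (hsi.2 δ γ hδγ hγL (combo a s'' t'') hgen).2.1 hb''I
            have hzero : lit ⊓ (lit' ⊓ combo a s'' t'') = ⊥ := by
              rw [← hsplit', ← hsplit]; exact hbot
            rcases hlit' with rfl | rfl <;> rcases hlit with rfl | rfl
            · exact h4.1 (by rw [← hzero]; ac_rfl)
            · exact h4.2.1 (by rw [← hzero]; ac_rfl)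
            · exact h4.2.2.1 (by rw [← hzero]; ac_rfl)
            · exact h4.2.2.2 (by rw [← hzero]; ac_rfl)

lemma inf_compl_congr {w c d : B} (h : w ⊓ c = w ⊓ d) : w ⊓ cᶜ = w ⊓ dᶜ := by
  have e : ∀ x : B, w ⊓ xᶜ = w ⊓ (w ⊓ x)ᶜ := by
    intro x
    rw [compl_inf, inf_sup_left, inf_compl_self, bot_sup_eq]
  rw [e c, e d, h]

lemma chain_of_target (hlam : ℵ₀ ≤ lam) (hsi : SemiIndepWith lam.ord a I)
    (ht : Tgt a I lam.ord) :
    ∃ c : Ordinal.{u} → B, ∀ β γ : Ordinal.{u}, β < γ → γ < lam.ord → c γ < c β := by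
  obtain ⟨x, δ, hδL, hxI, hxGen, hcase⟩ := ht
  have hadd : ∀ {β γ : Ordinal.{u}}, β < lam.ord → γ < lam.ord → β + γ < lam.ord := by
    intro β γ h1 h2
    rw [Cardinal.lt_ord] at h1 h2 ⊢
    rw [Ordinal.card_add]
    exact Cardinal.add_lt_of_lt hlam h1 h2
  have hgenle : ∀ {α : Ordinal.{u}}, δ ≤ α → BoolGen (genSet a α) x :=
    fun h => boolGen_mono (genSet_mono a h) hxGen
  rcases hcase with h0 | h0
  · -- x ⊓ a δ ∈ I
    have hmeet : ∀ γ, δ ≤ γ → γ < lam.ord → x ⊓ a γ ∈ I := by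
      intro γ h1 h2
      rcases h1.eq_or_lt with rfl | hlt
      · exact h0
      · exact (hsi.2 δ γ hlt h2 x hxGen).2.2.1 hxI h0
    set g : Ordinal.{u} → B := fun γ => x ⊓ a γ ⊓ a (γ + 1) with hg
    have hrep : ∀ γ γ', δ ≤ γ → γ < γ' → γ' < lam.ord → x ⊓ a γ ⊓ a γ' = g γ := by
      intro γ γ' hδγ hγγ' hγ'L
      have hγL : γ < lam.ord := hγγ'.trans hγ'L
      rcases (addOneLe hγγ').eq_or_lt with h | h
      · rw [← h]
      · have hgen : BoolGen (genSet a (γ + 1)) (x ⊓ a γ) :=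
          BoolGen.inf (hgenle (hδγ.trans (ltSelfAddOne γ).le))
            (BoolGen.base ⟨γ, ltSelfAddOne γ, rfl⟩)
        exact (hsi.2 (γ + 1) γ' h hγ'L (x ⊓ a γ) hgen).1 (hmeet γ hδγ hγL)
    have hmono : ∀ β γ, δ ≤ β → β < γ → γ < lam.ord → g β < g γ := by
      intro β γ hδβ hβγ hγL
      have hβL : β < lam.ord := hβγ.trans hγL
      have hγ1L : γ + 1 < lam.ord := succLt hlam hγL
      have h1 : g β = x ⊓ a β ⊓ a γ := (hrep β γ hδβ hβγ hγL).symm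
      have h2 : g β = x ⊓ a β ⊓ a (γ + 1) :=
        (hrep β (γ + 1) hδβ (hβγ.trans (ltSelfAddOne γ)) hγ1L).symm
      have hle : g β ≤ g γ := by
        rw [hg]
        refine le_inf (le_inf ?_ ?_) ?_
        · exact h1.le.trans (inf_le_left.trans inf_le_left)
        · exact h1.le.trans inf_le_right
        · exact h2.le.trans inf_le_right
      refine lt_of_le_of_ne hle ?_
      intro he
      have hgβaβ : g β ≤ a β := inf_le_left.trans inf_le_right
      have hgγaβ : g γ ≤ a β := he ▸ hgβaβ
      have hy : x ⊓ (a β)ᶜ ∉ I := by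
        intro hyI
        apply hxI
        have hx : (x ⊓ a β) ⊔ (x ⊓ (a β)ᶜ) = x := by
          rw [← inf_sup_left, sup_compl_eq_top, inf_top_eq]
        exact hx ▸ I.sup_mem (hmeet β hδβ hβL) hyI
      have hygen : BoolGen (genSet a γ) (x ⊓ (a β)ᶜ) :=
        BoolGen.inf (hgenle (hδβ.trans hβγ.le)) (BoolGen.compl (BoolGen.base ⟨β, hβγ, rfl⟩))
      have h4 := ((hsi.2 γ (γ + 1) (ltSelfAddOne γ) hγ1L _ hygen).2.1 hy).1
      apply h4
      have heq : x ⊓ (a β)ᶜ ⊓ a γ ⊓ a (γ + 1) = g γ ⊓ (a β)ᶜ := by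
        simp only [hg]; ac_rfl
      rw [heq]
      exact le_bot_iff.1 ((inf_le_inf_right _ hgγaβ).trans (by simp))
    refine ⟨fun γ => (g (δ + γ))ᶜ, ?_⟩
    intro β γ hβγ hγL
    exact compl_lt_compl_iff_lt.2
      (hmono (δ + β) (δ + γ) (le_self_add (a := δ) (b := β))
        ((add_lt_add_iff_left δ).2 hβγ) (hadd hδL hγL))
  · -- x \ a δ ∈ I
    have hdiff : ∀ γ, δ ≤ γ → γ < lam.ord → x ⊓ (a γ)ᶜ ∈ I := by
      intro γ h1 h2
      rcases h1.eq_or_lt with rfl | hlt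
      · rw [← sdiff_eq]; exact h0
      · rw [← sdiff_eq]; exact (hsi.2 δ γ hlt h2 x hxGen).2.2.2 hxI h0
    set g : Ordinal.{u} → B := fun γ => x ⊓ (a γ)ᶜ ⊓ (a (γ + 1))ᶜ with hg
    have hrep : ∀ γ γ', δ ≤ γ → γ < γ' → γ' < lam.ord → x ⊓ (a γ)ᶜ ⊓ (a γ')ᶜ = g γ := by
      intro γ γ' hδγ hγγ' hγ'L
      have hγL : γ < lam.ord := hγγ'.trans hγ'L
      rcases (addOneLe hγγ').eq_or_lt with h | h
      · rw [← h]
      · have hgen : BoolGen (genSet a (γ + 1)) (x ⊓ (a γ)ᶜ) :=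
          BoolGen.inf (hgenle (hδγ.trans (ltSelfAddOne γ).le))
            (BoolGen.compl (BoolGen.base ⟨γ, ltSelfAddOne γ, rfl⟩))
        exact inf_compl_congr
          ((hsi.2 (γ + 1) γ' h hγ'L (x ⊓ (a γ)ᶜ) hgen).1 (hdiff γ hδγ hγL))
    have hmono : ∀ β γ, δ ≤ β → β < γ → γ < lam.ord → g β < g γ := by
      intro β γ hδβ hβγ hγL
      have hβL : β < lam.ord := hβγ.trans hγL
      have hγ1L : γ + 1 < lam.ord := succLt hlam hγL
      have h1 : g β = x ⊓ (a β)ᶜ ⊓ (a γ)ᶜ := (hrep β γ hδβ hβγ hγL).symm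
      have h2 : g β = x ⊓ (a β)ᶜ ⊓ (a (γ + 1))ᶜ :=
        (hrep β (γ + 1) hδβ (hβγ.trans (ltSelfAddOne γ)) hγ1L).symm
      have hle : g β ≤ g γ := by
        rw [hg]
        refine le_inf (le_inf ?_ ?_) ?_
        · exact h1.le.trans (inf_le_left.trans inf_le_left)
        · exact h1.le.trans inf_le_right
        · exact h2.le.trans inf_le_right
      refine lt_of_le_of_ne hle ?_
      intro he
      have hgβaβ : g β ≤ (a β)ᶜ := inf_le_left.trans inf_le_right
      have hgγaβ : g γ ≤ (a β)ᶜ := he ▸ hgβaβ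
      have hy : x ⊓ a β ∉ I := by
        intro hyI
        apply hxI
        have hx : (x ⊓ a β) ⊔ (x ⊓ (a β)ᶜ) = x := by
          rw [← inf_sup_left, sup_compl_eq_top, inf_top_eq]
        exact hx ▸ I.sup_mem hyI (hdiff β hδβ hβL)
      have hygen : BoolGen (genSet a γ) (x ⊓ a β) :=
        BoolGen.inf (hgenle (hδβ.trans hβγ.le)) (BoolGen.base ⟨β, hβγ, rfl⟩)
      have h4 := ((hsi.2 γ (γ + 1) (ltSelfAddOne γ) hγ1L _ hygen).2.1 hy).2.2.2
      apply h4
      have heq : x ⊓ a β ⊓ (a γ)ᶜ ⊓ (a (γ + 1))ᶜ = g γ ⊓ a β := by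
        simp only [hg]; ac_rfl
      rw [heq]
      have : g γ ⊓ a β ≤ (a β)ᶜ ⊓ a β := inf_le_inf_right _ hgγaβ
      exact le_bot_iff.1 (this.trans (by simp))
    refine ⟨fun γ => (g (δ + γ))ᶜ, ?_⟩
    intro β γ hβγ hγL
    exact compl_lt_compl_iff_lt.2
      (hmono (δ + β) (δ + γ) (le_self_add (a := δ) (b := β))
        ((add_lt_add_iff_left δ).2 hβγ) (hadd hδL hγL))

lemma dichotomy (hlam : ℵ₀ ≤ lam) (hsi : SemiIndepWith lam.ord a I) :
    IndepSeq lam.ord a ∨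
      ∃ c : Ordinal.{u} → B, ∀ β γ : Ordinal.{u}, β < γ → γ < lam.ord → c γ < c β := by
  by_cases h : IndepSeq lam.ord a
  · exact Or.inl h
  · refine Or.inr (chain_of_target hlam hsi ?_)
    rw [IndepSeq] at h
    push_neg at h
    obtain ⟨s, t, hs, ht, hdisj, hbot⟩ := h
    exact target_of_bot hlam hsi (s ∪ t).card s t le_rfl hdisj hs ht hbot

lemma indepSet_of_indepSeq (hseq : IndepSeq lam.ord a) :
    IndepSet {y : B | ∃ β, β < lam.ord ∧ a β = y} := by
  classical
  intro s t hsS htS hdisj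
  set F : B → Ordinal.{u} :=
    fun y => if h : ∃ β, β < lam.ord ∧ a β = y then h.choose else 0 with hF
  have hFspec : ∀ y : B, (∃ β, β < lam.ord ∧ a β = y) → F y < lam.ord ∧ a (F y) = y := by
    intro y hy
    rw [hF]
    simp only [dif_pos hy]
    exact ⟨hy.choose_spec.1, hy.choose_spec.2⟩
  have hs' : (s.image F).inf a = s.inf id := by
    rw [Finset.inf_image]
    exact Finset.inf_congr rfl fun y hy => (hFspec y (hsS hy)).2
  have ht' : (t.image F).inf (fun β => (a β)ᶜ) = t.inf (fun b => bᶜ) := by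
    rw [Finset.inf_image]
    exact Finset.inf_congr rfl fun y hy => by
      show (a (F y))ᶜ = yᶜ
      rw [(hFspec y (htS hy)).2]
  have hdisj' : Disjoint (s.image F) (t.image F) := by
    rw [Finset.disjoint_left]
    rintro β hβs hβt
    obtain ⟨y, hy, rfl⟩ := Finset.mem_image.1 hβs
    obtain ⟨z, hz, he⟩ := Finset.mem_image.1 hβt
    have h1 := (hFspec y (hsS hy)).2
    have h2 := (hFspec z (htS hz)).2
    rw [he, h1] at h2
    exact Finset.disjoint_left.1 hdisj hy (h2 ▸ hz)
  have := hseq (s.image F) (t.image F)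
    (fun β hβ => by
      obtain ⟨y, hy, rfl⟩ := Finset.mem_image.1 hβ
      exact (hFspec y (hsS hy)).1)
    (fun β hβ => by
      obtain ⟨y, hy, rfl⟩ := Finset.mem_image.1 hβ
      exact (hFspec y (htS hy)).1)
    hdisj'
  rw [hs', ht'] at this
  exact this

noncomputable def idx (o : Ordinal.{u}) (i : o.ToType) : Ordinal.{u} :=
  ((Ordinal.ToType.mk (o := o)).symm i : Set.Iio o)

lemma idx_lt (o : Ordinal.{u}) (i : o.ToType) : idx o i < o :=
  ((Ordinal.ToType.mk (o := o)).symm i).2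

lemma idx_inj {o : Ordinal.{u}} : Function.Injective (idx o) := fun i j h =>
  (Ordinal.ToType.mk (o := o)).symm.injective (Subtype.ext h)

lemma idx_surj (o : Ordinal.{u}) {β : Ordinal.{u}} (hβ : β < o) :
    ∃ i, idx o i = β := by
  refine ⟨Ordinal.ToType.mk (o := o) ⟨β, hβ⟩, ?_⟩
  simp [idx]

lemma card_genSet (hsi : SemiIndepWith lam.ord a I) :
    #{y : B | ∃ β, β < lam.ord ∧ a β = y} = lam := by
  classical
  set F : lam.ord.ToType → B := fun i => a (idx lam.ord i) with hF
  have hSeq : {y : B | ∃ β, β < lam.ord ∧ a β = y} = Set.range F := by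
    ext y
    constructor
    · rintro ⟨β, hβ, rfl⟩
      obtain ⟨i, hi⟩ := idx_surj lam.ord hβ
      exact ⟨i, by rw [hF]; simp only [hi]⟩
    · rintro ⟨i, rfl⟩
      exact ⟨_, idx_lt lam.ord i, rfl⟩
  have hFinj : Function.Injective F := by
    intro i j h
    by_contra hne
    exact hsi.1 _ _ (idx_lt lam.ord i) (idx_lt lam.ord j)
      (fun e => hne (idx_inj e)) h
  rw [hSeq, Cardinal.mk_range_eq F hFinj]
  have : #(lam.ord.ToType) = lam := by rw [Cardinal.mk_toType, Cardinal.card_ord]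
  exact this

lemma Sind_nonempty (B : Type u) [BooleanAlgebra B] :
    {c : Cardinal.{u} | ¬ ∃ a : Ordinal.{u} → B, IndepSeq c.ord a}.Nonempty := by
  classical
  refine ⟨Order.succ #B, ?_⟩
  rintro ⟨a, ha⟩
  set o : Ordinal.{u} := (Order.succ #B).ord with ho
  have hinj : Function.Injective (fun i : o.ToType => a (idx o i)) := by
    intro i j h
    by_contra hne
    have hne' : idx o i ≠ idx o j := fun e => hne (idx_inj e)
    refine ha {idx o i} {idx o j}
      (by simpa using idx_lt o i) (by simpa using idx_lt o j)
      (Finset.disjoint_singleton.2 hne') ?_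
    simp only [Finset.inf_singleton]
    have h' : a (idx o i) = a (idx o j) := h
    rw [h']
    exact inf_compl_eq_bot
  have hle := Cardinal.mk_le_of_injective hinj
  rw [Cardinal.mk_toType, ho, Cardinal.card_ord] at hle
  exact absurd hle (not_le.2 (Order.lt_succ #B))

lemma Sdep_nonempty (B : Type u) [BooleanAlgebra B] :
    {c : Cardinal.{u} |
      ¬ ∃ f : Ordinal.{u} → B, ∀ i j : Ordinal.{u}, i < j → j < c.ord → f i < f j}.Nonempty := by
  classical
  refine ⟨Order.succ #B, ?_⟩
  rintro ⟨f, hf⟩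
  set o : Ordinal.{u} := (Order.succ #B).ord with ho
  have hinj : Function.Injective (fun i : o.ToType => f (idx o i)) := by
    intro i j h
    by_contra hne
    have hne' : idx o i ≠ idx o j := fun e => hne (idx_inj e)
    rcases hne'.lt_or_gt with hlt | hlt
    · exact (hf _ _ hlt (idx_lt o j)).ne (show f (idx o i) = f (idx o j) from h)
    · exact (hf _ _ hlt (idx_lt o i)).ne (show f (idx o i) = f (idx o j) from h).symm
  have hle := Cardinal.mk_le_of_injective hinj
  rw [Cardinal.mk_toType, ho, Cardinal.card_ord] at hle
  exact absurd hle (not_le.2 (Order.lt_succ #B))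

lemma indepSeq_restrict {o o' : Ordinal.{u}} (h : o' ≤ o) (hseq : IndepSeq o a) :
    IndepSeq o' a :=
  fun s t hs ht hd =>
    hseq s t (fun β hβ => (hs β hβ).trans_le h) (fun β hβ => (ht β hβ).trans_le h) hd


end Main

/-- If `λ` is an infinite cardinal and `⟨a_β : β < λ⟩` is a semi-independent
sequence in `B`, then either `{a_β : β < λ}` is an independent subset of cardinality `λ`, or
`B` has a strictly decreasing sequence of length `λ`.  Consequently
`si⁺(B) ≤ ind⁺(B) + Depth⁺(B)`. -/
theorem stmt_11 (B : Type u) [BooleanAlgebra B] (lam : Cardinal.{u}) (hlam : ℵ₀ ≤ lam)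
    (a : Ordinal.{u} → B) (I : Order.Ideal B) (hsi : SemiIndepWith lam.ord a I) :
    ((IndepSet {y : B | ∃ β, β < lam.ord ∧ a β = y} ∧
        #{y : B | ∃ β, β < lam.ord ∧ a β = y} = lam) ∨
      ∃ c : Ordinal.{u} → B, ∀ β γ : Ordinal.{u}, β < γ → γ < lam.ord → c γ < c β) ∧
    siPlus B ≤ indPlus B + depthPlus B := by
  have dich := dichotomy hlam hsi
  constructor
  · rcases dich with h | h
    · exact Or.inl ⟨indepSet_of_indepSeq h, card_genSet hsi⟩
    · exact Or.inr h
  · have hindmem : ¬ ∃ a' : Ordinal.{u} → B, IndepSeq (indPlus B).ord a' :=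
      csInf_mem (Sind_nonempty B)
    have hdepmem : ¬ ∃ f : Ordinal.{u} → B,
        ∀ i j : Ordinal.{u}, i < j → j < (depthPlus B).ord → f i < f j :=
      csInf_mem (Sdep_nonempty B)
    have hindle : indPlus B ≤ indPlus B + depthPlus B := self_le_add_right _ _
    have hdeple : depthPlus B ≤ indPlus B + depthPlus B := self_le_add_left _ _
    have hlamlt : lam < indPlus B + depthPlus B := by
      rcases dich with h | h
      · refine lt_of_lt_of_le ?_ hindle
        by_contra h'
        exact hindmem ⟨a, indepSeq_restrict (Cardinal.ord_le_ord.2 (not_lt.1 h')) h⟩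
      · refine lt_of_lt_of_le ?_ hdeple
        by_contra h'
        obtain ⟨c, hc⟩ := h
        refine hdepmem ⟨fun i => (c i)ᶜ, fun i j hij hj => ?_⟩
        exact compl_lt_compl_iff_lt.2
          (hc i j hij (hj.trans_le (Cardinal.ord_le_ord.2 (not_lt.1 h'))))
    have hμinf : ℵ₀ ≤ indPlus B + depthPlus B := hlam.trans hlamlt.le
    refine csInf_le' ?_
    rintro ⟨a', I', hsi'⟩
    rcases dichotomy hμinf hsi' with h | h
    · exact hindmem ⟨a', indepSeq_restrict (Cardinal.ord_le_ord.2 hindle) h⟩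
    · obtain ⟨c, hc⟩ := h
      refine hdepmem ⟨fun i => (c i)ᶜ, fun i j hij hj => ?_⟩
      exact compl_lt_compl_iff_lt.2
        (hc i j hij (hj.trans_le (Cardinal.ord_le_ord.2 hdeple)))
end

section
/- Let B be a Boolean algebra with a maximal ideal J that is τ-local (i.e. |{y ∈ B : y ≤ x}| ≤ τ for every x ∈ J). Then the number of ultrafilters of B is at most 2^τ + |B|. -/
universe u

open Cardinal

/-- An ultrafilter of a Boolean algebra, as a set. -/
def IsUltrafilterSet {B : Type u} [BooleanAlgebra B] (D : Set B) : Prop :=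
  ⊥ ∉ D ∧ (∀ a b : B, a ∈ D → a ≤ b → b ∈ D) ∧
    (∀ a b : B, a ∈ D → b ∈ D → a ⊓ b ∈ D) ∧ ∀ a : B, a ∈ D ∨ aᶜ ∈ D

/-!
An ultrafilter either avoids the maximal ideal `J`, and then it is `B \ J`, or it contains some
`x ∈ J`, and then it is determined by its trace on `Iic x`, a subset of a set of size at most `τ`.
Hence there are at most `1 + |J| · 2^τ ≤ 2^τ + |B|` ultrafilters.
-/

namespace IsUltrafilterSet

variable {B : Type u} [BooleanAlgebra B] {D D' : Set B}

theorem inf_mem_iff (hD : IsUltrafilterSet D) {x : B} (hx : x ∈ D) (b : B) :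
    b ⊓ x ∈ D ↔ b ∈ D :=
  ⟨fun h => hD.2.1 _ _ h inf_le_left, fun h => hD.2.2.1 _ _ h hx⟩

theorem eq_of_forall_le_mem_iff (hD : IsUltrafilterSet D) (hD' : IsUltrafilterSet D') {x : B}
    (hx : x ∈ D) (h : ∀ y ≤ x, y ∈ D ↔ y ∈ D') : D = D' := by
  have hx' : x ∈ D' := (h x le_rfl).1 hx
  ext b
  rw [← hD.inf_mem_iff hx, ← hD'.inf_mem_iff hx', h _ inf_le_right]

theorem eq_compl_of_disjoint {J : Set B} (hJ : ∀ b : B, b ∈ J ∨ bᶜ ∈ J)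
    (hD : IsUltrafilterSet D) (hDJ : Disjoint D J) : D = Jᶜ := by
  refine Set.Subset.antisymm hDJ.subset_compl_right fun b hb => ?_
  rcases hD.2.2.2 b with h | h
  · exact h
  · exact absurd h (hDJ.notMem_of_mem_right ((hJ b).resolve_left hb))

end IsUltrafilterSet

theorem mk_setOf_isUltrafilterSet_mem_le {B : Type u} [BooleanAlgebra B] (x : B) :
    #{D : Set B | IsUltrafilterSet D ∧ x ∈ D} ≤ 2 ^ #(Set.Iic x) := by
  rw [← mk_set]
  refine mk_le_of_injective (f := fun D => Subtype.val ⁻¹' D.1) ?_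
  rintro ⟨D, hD, hx⟩ ⟨D', hD', _⟩ htrace
  exact Subtype.ext (hD.eq_of_forall_le_mem_iff hD' hx fun y hy => Set.ext_iff.1 htrace ⟨y, hy⟩)

theorem setOf_isUltrafilterSet_subset {B : Type u} [BooleanAlgebra B] {J : Set B}
    (hJ : ∀ b : B, b ∈ J ∨ bᶜ ∈ J) :
    {D : Set B | IsUltrafilterSet D} ⊆
      insert Jᶜ (⋃ x : J, {D : Set B | IsUltrafilterSet D ∧ (x : B) ∈ D}) := by
  intro D hD
  by_cases hDJ : Disjoint D J
  · exact Or.inl (IsUltrafilterSet.eq_compl_of_disjoint hJ hD hDJ)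
  · obtain ⟨x, hxD, hxJ⟩ := Set.not_disjoint_iff.1 hDJ
    exact Or.inr (Set.mem_iUnion.2 ⟨⟨x, hxJ⟩, hD, hxD⟩)

/-- If a Boolean algebra `B` has a maximal ideal `J` that is `τ`-local
(every `x ∈ J` has at most `τ` elements below it), then `B` has at most `2^τ + |B|`
ultrafilters. -/
theorem stmt_14 (B : Type u) [BooleanAlgebra B] (τ : Cardinal.{u}) (hτ : ℵ₀ ≤ τ)
    (J : Order.Ideal B)
    (hmax : (⊤ : B) ∉ J ∧ ∀ b : B, b ∈ J ∨ bᶜ ∈ J)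
    (hlocal : ∀ x ∈ J, #{y : B | y ≤ x} ≤ τ) :
    #{D : Set B | IsUltrafilterSet D} ≤ 2 ^ τ + #B := by
  set c := 2 ^ τ + #B
  have hc : ℵ₀ ≤ c := (hτ.trans (cantor τ).le).trans (self_le_add_right _ _)
  have hJ : #(J : Set B) ≤ c := (mk_set_le _).trans le_add_self
  have hpiece : ∀ x : (J : Set B),
      #{D : Set B | IsUltrafilterSet D ∧ (x : B) ∈ D} ≤ c := fun x =>
    (mk_setOf_isUltrafilterSet_mem_le (x : B)).trans
      ((power_le_power_left two_ne_zero (hlocal x x.2)).trans (self_le_add_right _ _))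
  calc #{D : Set B | IsUltrafilterSet D}
      ≤ #(⋃ x : (J : Set B), {D : Set B | IsUltrafilterSet D ∧ (x : B) ∈ D}) + 1 :=
        (mk_le_mk_of_subset (setOf_isUltrafilterSet_subset hmax.2)).trans mk_insert_le
    _ ≤ #(J : Set B) * c + 1 := by
        gcongr
        exact mk_iUnion_le_sum_mk.trans ((sum_le_sum _ _ hpiece).trans (sum_const' _ _).le)
    _ ≤ c * c + 1 := by gcongr
    _ = c := by rw [mul_eq_self hc, add_one_eq hc]
end
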